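/- arXiv:math-ph/9809016 — 7 statements merged into one kernel-verified Lean document; each statement's English description precedes it below -/
import Mathlib

section
/- Assume V₀ < d₀²/4. Then for every real number r with r_min ≤ r < r_max there exists exactly one bounded operator X on H such that ‖X‖ ≤ r, the spectrum of A + X is disjoint from Γ (so that V(A+X) is defined), and X = V(A + X). Moreover this solution X (the same for all admissible r) satisfies ‖X‖ ≤ r_min. -/
/-!
For `‖X‖ ≤ r < d₀` the spectral theorem gives `‖(A - z)⁻¹‖ ≤ 1 / d₀` on `Γ`, and a Neumann series
then gives `‖(A + X - z)⁻¹‖ ≤ 1 / (d₀ - r)`. Integrating along `γ`, `X ↦ V(A + X)` maps the ball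
of radius `r` into the ball of radius `V₀ / (d₀ - r)` and is Lipschitz there with constant
`V₀ / (d₀ - r)²`. Since `r_min` is the smaller root of `r (d₀ - r) = V₀`, the ball of radius `r_min`
is invariant, and the Lipschitz constant is `< 1` exactly for `r < r_max`: Banach's fixed point
theorem gives the solution and contraction on the ball of radius `r` its uniqueness.
-/

open MeasureTheory Metric Set

noncomputable section

variable {H : Type*} [NormedAddCommGroup H] [InnerProductSpace ℂ H] [CompleteSpace H]

/-- `d₀ = inf_{t ∈ [0,1]} dist (γ t, σ(A))`. -/
noncomputable def curveDist (A : H →L[ℂ] H) (γ : ℝ → ℂ) : ℝ :=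
  ⨅ t : Set.Icc (0 : ℝ) 1, Metric.infDist (γ t) (spectrum ℂ A)

/-- `V₀ = ∫₀¹ |γ'(t)| ‖K(γ(t))‖ dt`. -/
noncomputable def curveVar (K : ℂ → H →L[ℂ] H) (γ : ℝ → ℂ) : ℝ :=
  ∫ t in (0:ℝ)..1, ‖derivWithin γ (Set.Icc 0 1) t‖ * ‖K (γ t)‖

/-- `V(Y) = ∫₀¹ γ'(t) • K(γ(t)) ∘ (Y − γ(t))⁻¹ dt` (Bochner integral in `B(H)`). -/
noncomputable def Vmap (K : ℂ → H →L[ℂ] H) (γ : ℝ → ℂ) (Y : H →L[ℂ] H) : H →L[ℂ] H :=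
  ∫ t in (0:ℝ)..1, derivWithin γ (Set.Icc 0 1) t •
    (K (γ t) ∘L Ring.inverse (Y - γ t • (1 : H →L[ℂ] H)))

/-- `r_min = d₀/2 − √(d₀²/4 − V₀)`. -/
noncomputable def rMin (A : H →L[ℂ] H) (K : ℂ → H →L[ℂ] H) (γ : ℝ → ℂ) : ℝ :=
  curveDist A γ / 2 - Real.sqrt ((curveDist A γ) ^ 2 / 4 - curveVar K γ)

/-- `r_max = d₀ − √V₀`. -/
noncomputable def rMax (A : H →L[ℂ] H) (K : ℂ → H →L[ℂ] H) (γ : ℝ → ℂ) : ℝ :=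
  curveDist A γ - Real.sqrt (curveVar K γ)

end

section NormedRing

variable {R : Type*} [NormedRing R]

theorem norm_ringInverse_sub_ringInverse_le {a b : R} (ha : IsUnit a) (hb : IsUnit b) {c : ℝ}
    (hac : ‖Ring.inverse a‖ ≤ c) (hbc : ‖Ring.inverse b‖ ≤ c) :
    ‖Ring.inverse a - Ring.inverse b‖ ≤ c ^ 2 * ‖a - b‖ := by
  have hc : 0 ≤ c := (norm_nonneg _).trans hac
  rw [Ring.inverse_sub_inverse ⟨fun _ ↦ hb, fun _ ↦ ha⟩, norm_sub_rev a b]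
  calc ‖Ring.inverse a * (b - a) * Ring.inverse b‖
      ≤ ‖Ring.inverse a‖ * ‖b - a‖ * ‖Ring.inverse b‖ := norm_mul₃_le
    _ ≤ c * ‖b - a‖ * c := by gcongr
    _ = c ^ 2 * ‖b - a‖ := by ring

variable [HasSummableGeomSeries R]

theorem norm_ringInverse_one_sub_le (h1 : ‖(1 : R)‖ ≤ 1) {t : R} (ht : ‖t‖ < 1) :
    ‖Ring.inverse (1 - t)‖ ≤ (1 - ‖t‖)⁻¹ := by
  rw [← geom_series_eq_inverse t ht]
  linarith [tsum_geometric_le_of_norm_lt_one t ht]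

/-- `b + x = b (1 + b⁻¹ x)`, and the second factor is inverted by a Neumann series. -/
theorem isUnit_add_and_norm_ringInverse_add_le (h1 : ‖(1 : R)‖ ≤ 1) {b x : R} (hb : IsUnit b)
    {d r : ℝ} (hbd : ‖Ring.inverse b‖ ≤ d⁻¹) (hx : ‖x‖ ≤ r) (hrd : r < d) :
    IsUnit (b + x) ∧ ‖Ring.inverse (b + x)‖ ≤ (d - r)⁻¹ := by
  obtain ⟨u, rfl⟩ := hb
  rw [Ring.inverse_unit] at hbd
  have hd : 0 < d := (norm_nonneg x).trans_lt (hx.trans_lt hrd)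
  have ht : ‖-(↑u⁻¹ * x)‖ ≤ r / d := by
    rw [norm_neg, div_eq_inv_mul]
    exact (norm_mul_le _ _).trans (mul_le_mul hbd hx (norm_nonneg _) (by positivity))
  have ht1 : ‖-(↑u⁻¹ * x)‖ < 1 := ht.trans_lt ((div_lt_one hd).2 hrd)
  have hw : ((u * Units.oneSub _ ht1 : Rˣ) : R) = u + x := by
    simp [mul_add, ← mul_assoc]
  refine ⟨hw ▸ Units.isUnit _, ?_⟩
  rw [← hw, Ring.inverse_unit, mul_inv_rev, Units.val_mul, ← Ring.inverse_unit,
    Units.val_oneSub]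
  calc ‖Ring.inverse (1 - -(↑u⁻¹ * x)) * ↑u⁻¹‖
      ≤ (1 - r / d)⁻¹ * d⁻¹ := by
        refine (norm_mul_le _ _).trans (mul_le_mul ?_ hbd (norm_nonneg _) ?_)
        · exact (norm_ringInverse_one_sub_le h1 ht1).trans
            (inv_anti₀ (by linarith [(div_lt_one hd).2 hrd]) (by linarith))
        · exact inv_nonneg.2 (by linarith [(div_lt_one hd).2 hrd])
    _ = (d - r)⁻¹ := by
        rw [← mul_inv, sub_mul, div_mul_cancel₀ _ hd.ne', one_mul]

end NormedRing

section CStarAlgebra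

variable {𝒜 : Type*} [CStarAlgebra 𝒜] {a : 𝒜} {z : ℂ}

theorem isUnit_sub_algebraMap_of_notMem_spectrum (hz : z ∉ spectrum ℂ a) :
    IsUnit (a - algebraMap ℂ 𝒜 z) := by
  simpa using (spectrum.notMem_iff.1 hz).neg

/-- The inverse is `cfc (fun μ ↦ (μ - z)⁻¹) a`, and the functional calculus of a normal element
is isometric. -/
theorem norm_ringInverse_sub_algebraMap_le [IsStarNormal a] {d : ℝ} (hd : 0 < d)
    (hdist : ∀ μ ∈ spectrum ℂ a, d ≤ dist z μ) :
    ‖Ring.inverse (a - algebraMap ℂ 𝒜 z)‖ ≤ d⁻¹ := by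
  have hne : ∀ μ ∈ spectrum ℂ a, μ - z ≠ 0 := fun μ hμ h ↦ by
    have := hdist μ hμ
    rw [dist_comm, dist_eq_norm, h, norm_zero] at this
    linarith
  have hcfc : a - algebraMap ℂ 𝒜 z = cfc (fun μ ↦ μ - z) a := by
    rw [cfc_sub .., cfc_id' ℂ a, cfc_const z a]
  rw [hcfc, ← cfc_inv _ a hne]
  refine norm_cfc_le (by positivity) fun μ hμ ↦ ?_
  rw [norm_inv, ← dist_eq_norm, dist_comm]
  exact inv_anti₀ hd (hdist μ hμ)

end CStarAlgebra

theorem LipschitzOnWith.exists_isFixedPt {α : Type*} [MetricSpace α] {f : α → α} {s : Set α}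
    {q : NNReal} (hf : LipschitzOnWith q f s) (hq : q < 1) (hs : IsComplete s)
    (hne : s.Nonempty) (hmaps : MapsTo f s s) : ∃ x ∈ s, Function.IsFixedPt f x := by
  obtain ⟨x, hx⟩ := hne
  obtain ⟨y, hy, hfy, -⟩ :=
    ContractingWith.exists_fixedPoint' hs hmaps ⟨hq, hf.mapsToRestrict hmaps⟩ hx
      (edist_ne_top x (f x))
  exact ⟨y, hy, hfy⟩

theorem LipschitzOnWith.eq_of_isFixedPt {α : Type*} [MetricSpace α] {f : α → α} {s : Set α}
    {q : NNReal} (hf : LipschitzOnWith q f s) (hq : q < 1) {x y : α} (hx : x ∈ s) (hy : y ∈ s)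
    (hfx : Function.IsFixedPt f x) (hfy : Function.IsFixedPt f y) : x = y := by
  have h := hf.dist_le_mul x hx y hy
  rw [hfx.eq, hfy.eq] at h
  have hq' : (q : ℝ) < 1 := hq
  exact dist_le_zero.1 (by nlinarith [dist_nonneg (x := x) (y := y)])

theorem half_sub_sqrt_nonneg {d V : ℝ} (hd : 0 ≤ d) (hV : 0 ≤ V) :
    0 ≤ d / 2 - √(d ^ 2 / 4 - V) := by
  rw [sub_nonneg]
  calc √(d ^ 2 / 4 - V) ≤ √((d / 2) ^ 2) := Real.sqrt_le_sqrt (by linarith)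
    _ = d / 2 := Real.sqrt_sq (by linarith)

theorem half_sub_sqrt_lt_sub_sqrt {d V : ℝ} (hd : 0 ≤ d) (hV : 0 ≤ V) (hVd : V < d ^ 2 / 4) :
    d / 2 - √(d ^ 2 / 4 - V) < d - √V := by
  have hV2 : √V < d / 2 := by
    calc √V < √((d / 2) ^ 2) := Real.sqrt_lt_sqrt hV (by linarith)
      _ = d / 2 := Real.sqrt_sq (by linarith)
  linarith [Real.sqrt_nonneg (d ^ 2 / 4 - V)]

/-- `d/2 - √(d²/4 - V)` is the smaller root of `ρ (d - ρ) = V`. -/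
theorem mul_inv_sub_half_sub_sqrt {d V : ℝ} (hd : 0 ≤ d) (hVd : V < d ^ 2 / 4) :
    V * (d - (d / 2 - √(d ^ 2 / 4 - V)))⁻¹ = d / 2 - √(d ^ 2 / 4 - V) := by
  have hs := Real.sq_sqrt (sub_nonneg.2 hVd.le)
  have hpos : 0 < d / 2 + √(d ^ 2 / 4 - V) := by
    linarith [Real.sqrt_pos.2 (sub_pos.2 hVd)]
  rw [show d - (d / 2 - √(d ^ 2 / 4 - V)) = d / 2 + √(d ^ 2 / 4 - V) by ring,
    mul_inv_eq_iff_eq_mul₀ hpos.ne']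
  nlinarith

theorem mul_inv_sub_sq_lt_one {d V r : ℝ} (hV : 0 ≤ V) (hr : r < d - √V) :
    V * (d - r)⁻¹ ^ 2 < 1 := by
  have hdr : 0 < d - r := by linarith [Real.sqrt_nonneg V]
  rw [inv_pow, mul_inv_lt_iff₀ (by positivity), one_mul]
  calc V = √V ^ 2 := (Real.sq_sqrt hV).symm
    _ < (d - r) ^ 2 := by gcongr; linarith

section Curve

variable {H : Type*} [NormedAddCommGroup H] [InnerProductSpace ℂ H]
  {A : H →L[ℂ] H} {K : ℂ → H →L[ℂ] H} {γ : ℝ → ℂ}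

theorem curveDist_nonneg : 0 ≤ curveDist A γ :=
  Real.iInf_nonneg fun _ ↦ infDist_nonneg

theorem curveDist_le_dist {t : ℝ} (ht : t ∈ Icc (0 : ℝ) 1) {μ : ℂ} (hμ : μ ∈ spectrum ℂ A) :
    curveDist A γ ≤ dist (γ t) μ :=
  (ciInf_le ⟨0, by rintro _ ⟨_, rfl⟩; exact infDist_nonneg⟩ (⟨t, ht⟩ : Icc (0 : ℝ) 1)).trans
    (infDist_le_dist_of_mem hμ)

theorem curveVar_nonneg : 0 ≤ curveVar K γ :=
  intervalIntegral.integral_nonneg zero_le_one fun _ _ ↦ by positivity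

theorem norm_integral_le_curveVar_mul (hγ : ContDiffOn ℝ 1 γ (Icc 0 1))
    (hK : ContinuousOn (fun t ↦ K (γ t)) (Icc 0 1)) {E : Type*} [NormedAddCommGroup E]
    [NormedSpace ℝ E] {F : ℝ → E} {C : ℝ}
    (hF : ∀ t ∈ Icc (0 : ℝ) 1, ‖F t‖ ≤ ‖derivWithin γ (Icc 0 1) t‖ * ‖K (γ t)‖ * C) :
    ‖∫ t in (0 : ℝ)..1, F t‖ ≤ curveVar K γ * C := by
  have hg : ContinuousOn (fun t ↦ ‖derivWithin γ (Icc 0 1) t‖ * ‖K (γ t)‖ * C) (Icc 0 1) :=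
    ((hγ.continuousOn_derivWithin (uniqueDiffOn_Icc one_pos) le_rfl).norm.mul
      hK.norm).mul continuousOn_const
  calc ‖∫ t in (0 : ℝ)..1, F t‖
      ≤ ∫ t in (0 : ℝ)..1, ‖derivWithin γ (Icc 0 1) t‖ * ‖K (γ t)‖ * C :=
        intervalIntegral.norm_integral_le_of_norm_le zero_le_one
          (ae_of_all _ fun t ht ↦ hF t (Ioc_subset_Icc_self ht))
          (hg.intervalIntegrable_of_Icc zero_le_one)
    _ = curveVar K γ * C := intervalIntegral.integral_mul_const C _

variable [CompleteSpace H]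

theorem isUnit_and_norm_ringInverse_add_sub_smul_le (hA : IsSelfAdjoint A) {X : H →L[ℂ] H}
    {r : ℝ} (hX : ‖X‖ ≤ r) (hr : r < curveDist A γ) {t : ℝ} (ht : t ∈ Icc (0 : ℝ) 1) :
    IsUnit (A + X - γ t • (1 : H →L[ℂ] H)) ∧
      ‖Ring.inverse (A + X - γ t • (1 : H →L[ℂ] H))‖ ≤ (curveDist A γ - r)⁻¹ := by
  have hd : 0 < curveDist A γ := (norm_nonneg X).trans_lt (hX.trans_lt hr)
  have hdist : ∀ μ ∈ spectrum ℂ A, curveDist A γ ≤ dist (γ t) μ := fun _ ↦ curveDist_le_dist ht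
  have hγt : γ t ∉ spectrum ℂ A := fun hμ ↦ by linarith [hdist _ hμ, dist_self (γ t)]
  have := hA.isStarNormal
  rw [show A + X - γ t • (1 : H →L[ℂ] H) = A - algebraMap ℂ _ (γ t) + X by
    rw [Algebra.algebraMap_eq_smul_one]; abel]
  exact isUnit_add_and_norm_ringInverse_add_le ContinuousLinearMap.norm_id_le
    (isUnit_sub_algebraMap_of_notMem_spectrum hγt) (norm_ringInverse_sub_algebraMap_le hd hdist)
    hX hr

theorem disjoint_spectrum_add_image (hA : IsSelfAdjoint A) {X : H →L[ℂ] H} {r : ℝ}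
    (hX : ‖X‖ ≤ r) (hr : r < curveDist A γ) :
    Disjoint (spectrum ℂ (A + X)) (γ '' Icc (0 : ℝ) 1) := by
  rw [disjoint_right]
  rintro _ ⟨t, ht, rfl⟩ hmem
  apply spectrum.mem_iff.1 hmem
  simpa [Algebra.algebraMap_eq_smul_one] using
    (isUnit_and_norm_ringInverse_add_sub_smul_le hA hX hr ht).1.neg

theorem continuousOn_Vmap_integrand (hγ : ContDiffOn ℝ 1 γ (Icc 0 1))
    (hK : ContinuousOn (fun t ↦ K (γ t)) (Icc 0 1)) {Y : H →L[ℂ] H}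
    (hY : ∀ t ∈ Icc (0 : ℝ) 1, IsUnit (Y - γ t • (1 : H →L[ℂ] H))) :
    ContinuousOn (fun t ↦ derivWithin γ (Icc 0 1) t •
      (K (γ t) ∘L Ring.inverse (Y - γ t • (1 : H →L[ℂ] H)))) (Icc 0 1) := by
  have hinv : ContinuousOn (fun t ↦ Ring.inverse (Y - γ t • (1 : H →L[ℂ] H))) (Icc 0 1) := by
    intro t ht
    have hcont := NormedRing.inverse_continuousAt (hY t ht).unit
    rw [IsUnit.unit_spec] at hcont
    exact hcont.comp_continuousWithinAt (f := fun u ↦ Y - γ u • (1 : H →L[ℂ] H))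
      ((continuousOn_const.sub (hγ.continuousOn.smul continuousOn_const)) t ht)
  exact (hγ.continuousOn_derivWithin (uniqueDiffOn_Icc one_pos) le_rfl).smul (hK.clm_comp hinv)

theorem norm_Vmap_add_le (hA : IsSelfAdjoint A) (hγ : ContDiffOn ℝ 1 γ (Icc 0 1))
    (hK : ContinuousOn (fun t ↦ K (γ t)) (Icc 0 1)) {X : H →L[ℂ] H} {r : ℝ} (hX : ‖X‖ ≤ r)
    (hr : r < curveDist A γ) :
    ‖Vmap K γ (A + X)‖ ≤ curveVar K γ * (curveDist A γ - r)⁻¹ := by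
  refine norm_integral_le_curveVar_mul hγ hK fun t ht ↦ ?_
  rw [norm_smul, mul_assoc]
  gcongr
  exact (ContinuousLinearMap.opNorm_comp_le _ _).trans
    (by gcongr; exact (isUnit_and_norm_ringInverse_add_sub_smul_le hA hX hr ht).2)

theorem norm_Vmap_add_sub_Vmap_add_le (hA : IsSelfAdjoint A) (hγ : ContDiffOn ℝ 1 γ (Icc 0 1))
    (hK : ContinuousOn (fun t ↦ K (γ t)) (Icc 0 1)) {X Y : H →L[ℂ] H} {r : ℝ} (hX : ‖X‖ ≤ r)
    (hY : ‖Y‖ ≤ r) (hr : r < curveDist A γ) :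
    ‖Vmap K γ (A + X) - Vmap K γ (A + Y)‖ ≤
      curveVar K γ * (curveDist A γ - r)⁻¹ ^ 2 * ‖X - Y‖ := by
  have hXres := fun t (ht : t ∈ Icc (0 : ℝ) 1) ↦
    isUnit_and_norm_ringInverse_add_sub_smul_le hA hX hr ht
  have hYres := fun t (ht : t ∈ Icc (0 : ℝ) 1) ↦
    isUnit_and_norm_ringInverse_add_sub_smul_le hA hY hr ht
  rw [Vmap, Vmap, ← intervalIntegral.integral_sub
    ((continuousOn_Vmap_integrand hγ hK fun t ht ↦ (hXres t ht).1).intervalIntegrable_of_Icc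
      zero_le_one)
    ((continuousOn_Vmap_integrand hγ hK fun t ht ↦ (hYres t ht).1).intervalIntegrable_of_Icc
      zero_le_one), mul_assoc]
  refine norm_integral_le_curveVar_mul hγ hK fun t ht ↦ ?_
  have hdiff : A + X - γ t • (1 : H →L[ℂ] H) - (A + Y - γ t • 1) = X - Y := by abel
  rw [← smul_sub, ← ContinuousLinearMap.comp_sub, norm_smul, mul_assoc]
  gcongr
  refine (ContinuousLinearMap.opNorm_comp_le _ _).trans ?_
  gcongr
  simpa only [hdiff] using norm_ringInverse_sub_ringInverse_le (hXres t ht).1 (hYres t ht).1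
    (hXres t ht).2 (hYres t ht).2

theorem exists_lipschitzOnWith_Vmap_add_lt_one (hA : IsSelfAdjoint A)
    (hγ : ContDiffOn ℝ 1 γ (Icc 0 1)) (hK : ContinuousOn (fun t ↦ K (γ t)) (Icc 0 1)) {r : ℝ}
    (hr : r < rMax A K γ) :
    ∃ q < 1, LipschitzOnWith q (fun X ↦ Vmap K γ (A + X)) (closedBall 0 r) := by
  have hrd : r < curveDist A γ := hr.trans_le (sub_le_self _ (Real.sqrt_nonneg _))
  refine ⟨_, Real.toNNReal_lt_one.2 (mul_inv_sub_sq_lt_one curveVar_nonneg hr),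
    LipschitzOnWith.of_dist_le' fun X hX Y hY ↦ ?_⟩
  rw [mem_closedBall_zero_iff] at hX hY
  simpa only [dist_eq_norm] using norm_Vmap_add_sub_Vmap_add_le hA hγ hK hX hY hrd

end Curve

variable {H : Type*} [NormedAddCommGroup H] [InnerProductSpace ℂ H] [CompleteSpace H]

theorem statement0_general (A : H →L[ℂ] H) (hA : IsSelfAdjoint A)
    (γ : ℝ → ℂ) (hγ : ContDiffOn ℝ 1 γ (Set.Icc 0 1))
    (K : ℂ → H →L[ℂ] H) (hK : ContinuousOn (fun t => K (γ t)) (Set.Icc 0 1))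
    (hV : curveVar K γ < (curveDist A γ) ^ 2 / 4) :
    ∃ X : H →L[ℂ] H,
      (‖X‖ ≤ rMin A K γ ∧
        Disjoint (spectrum ℂ (A + X)) (γ '' Set.Icc (0:ℝ) 1) ∧
        X = Vmap K γ (A + X)) ∧
      ∀ r : ℝ, rMin A K γ ≤ r → r < rMax A K γ →
        ∀ Y : H →L[ℂ] H, ‖Y‖ ≤ r →
          Disjoint (spectrum ℂ (A + Y)) (γ '' Set.Icc (0:ℝ) 1) →
          Y = Vmap K γ (A + Y) → Y = X := by
  have hd : 0 ≤ curveDist A γ := curveDist_nonneg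
  have hρ : rMin A K γ < rMax A K γ := half_sub_sqrt_lt_sub_sqrt hd curveVar_nonneg hV
  have hρd : rMin A K γ < curveDist A γ := hρ.trans_le (sub_le_self _ (Real.sqrt_nonneg _))
  obtain ⟨_, hq, hlip⟩ := exists_lipschitzOnWith_Vmap_add_lt_one hA hγ hK hρ
  have hmaps : MapsTo (fun X ↦ Vmap K γ (A + X)) (closedBall 0 (rMin A K γ))
      (closedBall 0 (rMin A K γ)) := fun X hX ↦ by
    rw [mem_closedBall_zero_iff] at hX ⊢
    exact (norm_Vmap_add_le hA hγ hK hX hρd).trans_eq (mul_inv_sub_half_sub_sqrt hd hV)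
  obtain ⟨X, hX, hXfix⟩ := hlip.exists_isFixedPt hq isClosed_closedBall.isComplete
    (nonempty_closedBall.2 (half_sub_sqrt_nonneg hd curveVar_nonneg)) hmaps
  rw [mem_closedBall_zero_iff] at hX
  refine ⟨X, ⟨hX, disjoint_spectrum_add_image hA hX hρd, hXfix.symm⟩,
    fun r hρr hr Y hY _ hYfix ↦ ?_⟩
  obtain ⟨_, hq', hlip'⟩ := exists_lipschitzOnWith_Vmap_add_lt_one hA hγ hK hr
  exact hlip'.eq_of_isFixedPt hq' (mem_closedBall_zero_iff.2 hY)
    (mem_closedBall_zero_iff.2 (hX.trans hρr)) hYfix.symm hXfix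

/-- solvability of the basic equation `X = V(A + X)`. -/
theorem statement0 (A : H →L[ℂ] H) (hA : IsSelfAdjoint A)
    (γ : ℝ → ℂ) (hγ : ContDiffOn ℝ 1 γ (Set.Icc 0 1))
    (hΓ : ∀ t ∈ Set.Icc (0:ℝ) 1, γ t ∉ spectrum ℂ A)
    (K : ℂ → H →L[ℂ] H) (hK : ContinuousOn (fun t => K (γ t)) (Set.Icc 0 1))
    (hV : curveVar K γ < (curveDist A γ) ^ 2 / 4) :
    ∃ X : H →L[ℂ] H,
      (‖X‖ ≤ rMin A K γ ∧
        Disjoint (spectrum ℂ (A + X)) (γ '' Set.Icc (0:ℝ) 1) ∧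
        X = Vmap K γ (A + X)) ∧
      ∀ r : ℝ, rMin A K γ ≤ r → r < rMax A K γ →
        ∀ Y : H →L[ℂ] H, ‖Y‖ ≤ r →
          Disjoint (spectrum ℂ (A + Y)) (γ '' Set.Icc (0:ℝ) 1) →
          Y = Vmap K γ (A + Y) → Y = X :=
  statement0_general A hA γ hγ K hK hV
end

section
/- Let X be a bounded operator on H such that the spectrum of A + X is disjoint from Γ and X = V(A + X). If u ∈ H, z ∈ ℂ, and (A + X)u = z·u, then z does not lie on Γ unless u = 0, and u satisfies A u + V₁(z) u = z·u; equivalently, M(z) u = 0, where M(z) = A − z + V₁(z). Thus every eigenvalue of A + X is an eigenvalue of the continued transfer function M, with the same eigenvector. -/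
open MeasureTheory Metric Set

noncomputable section

variable {H : Type*} [NormedAddCommGroup H] [InnerProductSpace ℂ H] [CompleteSpace H]

/-- `V₁(z) = ∫₀¹ γ'(t) (z − γ(t))⁻¹ • K(γ(t)) dt`. -/
noncomputable def V1 (K : ℂ → H →L[ℂ] H) (γ : ℝ → ℂ) (z : ℂ) : H →L[ℂ] H :=
  ∫ t in (0:ℝ)..1, (derivWithin γ (Set.Icc 0 1) t * (z - γ t)⁻¹) • K (γ t)

/-- The continued transfer function `M(z) = A − z + V₁(z)`. -/
noncomputable def Mfun (A : H →L[ℂ] H) (K : ℂ → H →L[ℂ] H) (γ : ℝ → ℂ) (z : ℂ) :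
    H →L[ℂ] H :=
  A - z • (1 : H →L[ℂ] H) + V1 K γ z

/-- every eigenvalue of `A + X` (for a solution `X` of the basic
equation) is an eigenvalue of the continued transfer function `M`, with the same
eigenvector. -/
theorem statement2 (A : H →L[ℂ] H) (hA : IsSelfAdjoint A)
    (γ : ℝ → ℂ) (hγ : ContDiffOn ℝ 1 γ (Set.Icc 0 1))
    (hΓ : ∀ t ∈ Set.Icc (0:ℝ) 1, γ t ∉ spectrum ℂ A)
    (K : ℂ → H →L[ℂ] H) (hK : ContinuousOn (fun t => K (γ t)) (Set.Icc 0 1))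
    (X : H →L[ℂ] H)
    (hXσ : Disjoint (spectrum ℂ (A + X)) (γ '' Set.Icc (0:ℝ) 1))
    (hX : X = Vmap K γ (A + X))
    (u : H) (z : ℂ) (hu : (A + X) u = z • u) :
    (u ≠ 0 → z ∉ γ '' Set.Icc (0:ℝ) 1) ∧
    A u + V1 K γ z u = z • u ∧
    Mfun A K γ z u = 0 := by
  by_cases hu0 : u = 0
  · subst hu0
    refine ⟨fun h => absurd rfl h, by simp, by simp⟩
  -- z is in the spectrum of A + X
  have hzspec : z ∈ spectrum ℂ (A + X) := by
    rw [spectrum.mem_iff]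
    intro h
    have h1 : (↑(algebraMap ℂ (H →L[ℂ] H) z) - (A + X)) u = 0 := by
      simp [Algebra.algebraMap_eq_smul_one, hu]
    obtain ⟨B, hB⟩ := h.exists_left_inv
    have : u = 0 := by
      have := congrArg (fun T : H →L[ℂ] H => T u) hB
      simp only [ContinuousLinearMap.mul_apply, h1, map_zero,
        ContinuousLinearMap.one_apply] at this
      exact this.symm
    exact hu0 this
  have hzΓ : z ∉ γ '' Set.Icc (0:ℝ) 1 := Set.disjoint_left.mp hXσ hzspec
  -- γ t is not in the spectrum of A + X, units
  have hunit : ∀ t ∈ Set.Icc (0:ℝ) 1, IsUnit ((A + X) - γ t • (1 : H →L[ℂ] H)) := by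
    intro t ht
    have h1 : γ t ∉ spectrum ℂ (A + X) :=
      fun h => Set.disjoint_left.mp hXσ h ⟨t, ht, rfl⟩
    rw [spectrum.notMem_iff] at h1
    have := h1.neg
    simpa [Algebra.algebraMap_eq_smul_one, neg_sub] using this
  have hz_ne : ∀ t ∈ Set.Icc (0:ℝ) 1, z - γ t ≠ 0 := by
    intro t ht h
    exact hzΓ ⟨t, ht, (sub_eq_zero.mp h).symm⟩
  -- inverse applied to u
  have hinv : ∀ t ∈ Set.Icc (0:ℝ) 1,
      Ring.inverse ((A + X) - γ t • (1 : H →L[ℂ] H)) u = (z - γ t)⁻¹ • u := by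
    intro t ht
    have hU := hunit t ht
    have h1 : ((A + X) - γ t • (1 : H →L[ℂ] H)) u = (z - γ t) • u := by
      simp [ContinuousLinearMap.sub_apply, hu, sub_smul]
    have h2 : Ring.inverse ((A + X) - γ t • (1 : H →L[ℂ] H)) *
        ((A + X) - γ t • (1 : H →L[ℂ] H)) = 1 := Ring.inverse_mul_cancel _ hU
    have h3 := congrArg (fun T : H →L[ℂ] H => T u) h2
    simp only [ContinuousLinearMap.mul_apply, h1, _root_.map_smul,
      ContinuousLinearMap.one_apply] at h3
    conv_rhs => rw [← h3]
    rw [smul_smul, inv_mul_cancel₀ (hz_ne t ht), one_smul]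
  -- continuity of derivWithin γ
  have hUD : UniqueDiffOn ℝ (Set.Icc (0:ℝ) 1) := uniqueDiffOn_Icc (by norm_num)
  have hγ' : ContinuousOn (fun t => derivWithin γ (Set.Icc 0 1) t) (Set.Icc (0:ℝ) 1) :=
    hγ.continuousOn_derivWithin hUD le_rfl
  have hγc : ContinuousOn γ (Set.Icc (0:ℝ) 1) := hγ.continuousOn
  -- integrability of the Vmap integrand
  have hVint : IntervalIntegrable (fun t => derivWithin γ (Set.Icc 0 1) t •
      (K (γ t) ∘L Ring.inverse ((A + X) - γ t • (1 : H →L[ℂ] H)))) volume 0 1 := by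
    apply ContinuousOn.intervalIntegrable
    rw [Set.uIcc_of_le (by norm_num : (0:ℝ) ≤ 1)]
    apply hγ'.smul
    apply hK.clm_comp
    have hcinv : ContinuousOn (fun t => Ring.inverse ((A + X) - γ t • (1 : H →L[ℂ] H)))
        (Set.Icc (0:ℝ) 1) := by
      intro t ht
      have hf : ContinuousWithinAt (fun t => (A + X) - γ t • (1 : H →L[ℂ] H))
          (Set.Icc (0:ℝ) 1) t :=
        continuousWithinAt_const.sub ((hγc t ht).smul continuousWithinAt_const)
      have hR : ContinuousAt Ring.inverse ((A + X) - γ t • (1 : H →L[ℂ] H)) := by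
        have := NormedRing.inverse_continuousAt (hunit t ht).unit
        rwa [IsUnit.unit_spec] at this
      exact ContinuousAt.comp_continuousWithinAt (g := Ring.inverse)
        (f := fun s => (A + X) - γ s • (1 : H →L[ℂ] H)) hR hf
    exact hcinv
  have hV1int : IntervalIntegrable (fun t =>
      (derivWithin γ (Set.Icc 0 1) t * (z - γ t)⁻¹) • K (γ t)) volume 0 1 := by
    apply ContinuousOn.intervalIntegrable
    rw [Set.uIcc_of_le (by norm_num : (0:ℝ) ≤ 1)]
    exact (hγ'.mul ((continuousOn_const.sub hγc).inv₀ (fun t ht => hz_ne t ht))).smul hK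
  -- X u = V1 z u
  have hXu : X u = V1 K γ z u := by
    rw [hX, Vmap, V1, ContinuousLinearMap.intervalIntegral_apply hVint,
      ContinuousLinearMap.intervalIntegral_apply hV1int]
    apply intervalIntegral.integral_congr
    intro t ht
    rw [Set.uIcc_of_le (by norm_num : (0:ℝ) ≤ 1)] at ht
    simp only [ContinuousLinearMap.smul_apply, ContinuousLinearMap.comp_apply,
      hinv t ht, _root_.map_smul, smul_smul]
  have hmain : A u + V1 K γ z u = z • u := by
    rw [← hXu, ← ContinuousLinearMap.add_apply, hu]
  refine ⟨fun _ => hzΓ, hmain, ?_⟩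
  simp only [Mfun, ContinuousLinearMap.add_apply, ContinuousLinearMap.sub_apply,
    ContinuousLinearMap.smul_apply, ContinuousLinearMap.one_apply]
  rw [sub_add_eq_add_sub, hmain, sub_self]


end
end

section
/- Assume V₀ < d₀²/4, let X be the unique solution of X = V(A + X) with ‖X‖ ≤ r_min, and set H₁ = A + X. Then for every z ∈ ℂ ∖ Γ the continued transfer function factorizes as M(z) = W(z) ∘ (H₁ − z), where W(z) = I − ∫₀¹ γ'(t) (γ(t) − z)⁻¹ · K(γ(t)) ∘ (H₁ − γ(t))⁻¹ dt is a bounded operator on H. -/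
open MeasureTheory Metric Set

noncomputable section

variable {H : Type*} [NormedAddCommGroup H] [InnerProductSpace ℂ H] [CompleteSpace H]

/-- `W(z) = I − ∫₀¹ γ'(t) (γ(t) − z)⁻¹ • K(γ(t)) ∘ (H₁ − γ(t))⁻¹ dt`. -/
noncomputable def Wfun (K : ℂ → H →L[ℂ] H) (γ : ℝ → ℂ) (H₁ : H →L[ℂ] H) (z : ℂ) :
    H →L[ℂ] H :=
  1 - ∫ t in (0:ℝ)..1, (derivWithin γ (Set.Icc 0 1) t * (γ t - z)⁻¹) •
    (K (γ t) ∘L Ring.inverse (H₁ - γ t • (1 : H →L[ℂ] H)))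

/-!
Splitting `H₁ - z = (H₁ - γ t) + (γ t - z)` turns the integrand of `W(z) ∘ (H₁ - z)` into
`γ'(t) K(γ t) (H₁ - γ t)⁻¹ - γ'(t) (z - γ t)⁻¹ K(γ t)`, so that
`W(z) ∘ (H₁ - z) = H₁ - z + V₁(z) - V(H₁)`; the fixed-point equation `X = V(A + X)` then
cancels `X` against `V(H₁)` and leaves `A - z + V₁(z) = M(z)`.
-/

theorem isUnit_sub_smul_one_of_notMem_spectrum {𝕜 R : Type*} [CommRing 𝕜] [Ring R] [Algebra 𝕜 R]
    {a : R} {w : 𝕜} (h : w ∉ spectrum 𝕜 a) : IsUnit (a - w • (1 : R)) := by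
  simpa [spectrum.notMem_iff, Algebra.algebraMap_eq_smul_one] using (spectrum.notMem_iff.1 h).neg

theorem ContinuousOn.ring_inverse_sub_smul_one {α 𝔸 : Type*} [TopologicalSpace α] [NormedRing 𝔸]
    [NormedAlgebra ℂ 𝔸] [CompleteSpace 𝔸] {a : 𝔸} {γ : α → ℂ} {s : Set α}
    (hγ : ContinuousOn γ s) (hs : ∀ t ∈ s, γ t ∉ spectrum ℂ a) :
    ContinuousOn (fun t => Ring.inverse (a - γ t • (1 : 𝔸))) s := by
  intro t ht
  obtain ⟨u, hu⟩ := isUnit_sub_smul_one_of_notMem_spectrum (hs t ht)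
  have hinv : ContinuousAt Ring.inverse (a - γ t • (1 : 𝔸)) :=
    hu ▸ NormedRing.inverse_continuousAt u
  exact hinv.comp_continuousWithinAt (f := fun t => a - γ t • (1 : 𝔸))
    (continuousWithinAt_const.sub ((hγ t ht).smul continuousWithinAt_const))

theorem smul_mul_inverse_mul_sub_smul_one {𝕜 R : Type*} [Field 𝕜] [Ring R] [Algebra 𝕜 R]
    {a : R} {w z : 𝕜} (hu : IsUnit (a - w • (1 : R))) (hwz : w ≠ z) (d : 𝕜) (k : R) :
    ((d * (w - z)⁻¹) • (k * Ring.inverse (a - w • (1 : R)))) * (a - z • (1 : R)) =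
      d • (k * Ring.inverse (a - w • (1 : R))) - (d * (z - w)⁻¹) • k := by
  have hsplit : a - z • (1 : R) = (a - w • (1 : R)) + (w - z) • (1 : R) := by
    rw [sub_smul]; abel
  have hscalar : d * (w - z)⁻¹ * (w - z) = d := by
    rw [mul_assoc, inv_mul_cancel₀ (sub_ne_zero.2 hwz), mul_one]
  rw [hsplit, mul_add, smul_mul_assoc, mul_assoc, Ring.inverse_mul_cancel _ hu, mul_one,
    smul_mul_assoc, mul_smul_comm, mul_one, smul_smul, hscalar, ← neg_sub w z, inv_neg,
    mul_neg, neg_smul, sub_neg_eq_add, add_comm]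

theorem Wfun_comp_sub_smul_one {K : ℂ → H →L[ℂ] H} {γ : ℝ → ℂ} {H₁ : H →L[ℂ] H} {z : ℂ}
    (hγ : ContDiffOn ℝ 1 γ (Icc 0 1)) (hK : ContinuousOn (fun t => K (γ t)) (Icc 0 1))
    (hσ : Disjoint (spectrum ℂ H₁) (γ '' Icc 0 1)) (hz : z ∉ γ '' Icc 0 1) :
    Wfun K γ H₁ z ∘L (H₁ - z • 1) = H₁ - z • 1 + V1 K γ z - Vmap K γ H₁ := by
  set S := H₁ - z • (1 : H →L[ℂ] H)
  set γ' := derivWithin γ (Icc 0 1)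
  set R := fun t => K (γ t) ∘L Ring.inverse (H₁ - γ t • (1 : H →L[ℂ] H))
  have hγc : ContinuousOn γ (Icc 0 1) := hγ.continuousOn
  have hγ'c : ContinuousOn γ' (Icc 0 1) :=
    hγ.continuousOn_derivWithin (uniqueDiffOn_Icc one_pos) le_rfl
  have hσt : ∀ t ∈ Icc (0 : ℝ) 1, γ t ∉ spectrum ℂ H₁ :=
    fun t ht h => hσ.ne_of_mem h ⟨t, ht, rfl⟩ rfl
  have hzt : ∀ t ∈ Icc (0 : ℝ) 1, γ t ≠ z := fun t ht h => hz ⟨t, ht, h⟩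
  have hRc : ContinuousOn R (Icc 0 1) :=
    hK.mul (hγc.ring_inverse_sub_smul_one hσt)
  have hWint : IntervalIntegrable (fun t => (γ' t * (γ t - z)⁻¹) • R t) volume 0 1 :=
    ((hγ'c.mul ((hγc.sub continuousOn_const).inv₀ fun t ht => sub_ne_zero.2 (hzt t ht))).smul
      hRc).intervalIntegrable_of_Icc zero_le_one
  have hVint : IntervalIntegrable (fun t => γ' t • R t) volume 0 1 :=
    (hγ'c.smul hRc).intervalIntegrable_of_Icc zero_le_one
  have hV1int : IntervalIntegrable (fun t => (γ' t * (z - γ t)⁻¹) • K (γ t)) volume 0 1 :=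
    ((hγ'c.mul ((continuousOn_const.sub hγc).inv₀ fun t ht => sub_ne_zero.2 (hzt t ht).symm)).smul
      hK).intervalIntegrable_of_Icc zero_le_one
  have hpointwise : ∀ t ∈ uIcc (0 : ℝ) 1,
      (γ' t * (γ t - z)⁻¹) • R t ∘L S = γ' t • R t - (γ' t * (z - γ t)⁻¹) • K (γ t) := by
    intro t ht
    rw [uIcc_of_le zero_le_one] at ht
    exact smul_mul_inverse_mul_sub_smul_one
      (isUnit_sub_smul_one_of_notMem_spectrum (hσt t ht)) (hzt t ht) _ _
  calc Wfun K γ H₁ z ∘L S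
      = S - (∫ t in (0 : ℝ)..1, (γ' t * (γ t - z)⁻¹) • R t) ∘L S := by
        rw [Wfun, ContinuousLinearMap.sub_comp, ← ContinuousLinearMap.mul_def, one_mul]
    _ = S - ∫ t in (0 : ℝ)..1, (γ' t * (γ t - z)⁻¹) • R t ∘L S :=
        congrArg (S - ·)
          (((ContinuousLinearMap.compL ℂ H H H).flip S).intervalIntegral_comp_comm hWint).symm
    _ = S - ∫ t in (0 : ℝ)..1, (γ' t • R t - (γ' t * (z - γ t)⁻¹) • K (γ t)) := by
        rw [intervalIntegral.integral_congr hpointwise]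
    _ = S + V1 K γ z - Vmap K γ H₁ := by
        rw [intervalIntegral.integral_sub hVint hV1int, V1, Vmap]
        abel

theorem statement3_general (A : H →L[ℂ] H)
    (γ : ℝ → ℂ) (hγ : ContDiffOn ℝ 1 γ (Set.Icc 0 1))
    (K : ℂ → H →L[ℂ] H) (hK : ContinuousOn (fun t => K (γ t)) (Set.Icc 0 1))
    (X : H →L[ℂ] H)
    (hXσ : Disjoint (spectrum ℂ (A + X)) (γ '' Set.Icc (0:ℝ) 1))
    (hX : X = Vmap K γ (A + X)) :
    ∀ z : ℂ, z ∉ γ '' Set.Icc (0:ℝ) 1 →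
      Mfun A K γ z = Wfun K γ (A + X) z ∘L ((A + X) - z • (1 : H →L[ℂ] H)) := by
  intro z hz
  rw [Wfun_comp_sub_smul_one hγ hK hXσ hz, ← hX, Mfun]
  abel

/-- factorization theorem: `M(z) = W(z) ∘ (H₁ − z)` for `z ∉ Γ`. -/
theorem statement3 (A : H →L[ℂ] H) (hA : IsSelfAdjoint A)
    (γ : ℝ → ℂ) (hγ : ContDiffOn ℝ 1 γ (Set.Icc 0 1))
    (hΓ : ∀ t ∈ Set.Icc (0:ℝ) 1, γ t ∉ spectrum ℂ A)
    (K : ℂ → H →L[ℂ] H) (hK : ContinuousOn (fun t => K (γ t)) (Set.Icc 0 1))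
    (hV : curveVar K γ < (curveDist A γ) ^ 2 / 4)
    (X : H →L[ℂ] H) (hXn : ‖X‖ ≤ rMin A K γ)
    (hXσ : Disjoint (spectrum ℂ (A + X)) (γ '' Set.Icc (0:ℝ) 1))
    (hX : X = Vmap K γ (A + X)) :
    ∀ z : ℂ, z ∉ γ '' Set.Icc (0:ℝ) 1 →
      Mfun A K γ z = Wfun K γ (A + X) z ∘L ((A + X) - z • (1 : H →L[ℂ] H)) :=
  statement3_general A γ hγ K hK X hXσ hX
end
end

section
/- Assume V₀ < d₀²/4, let X be the unique solution of X = V(A + X) with ‖X‖ ≤ r_min, and set H₁ = A + X. Then the spectrum of H₁ is contained in the closed r_min-neighborhood of the spectrum of A: σ(H₁) ⊆ {z ∈ ℂ : dist(z, σ(A)) ≤ r_min}. -/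
open MeasureTheory Metric Set

noncomputable section

variable {H : Type*} [NormedAddCommGroup H] [InnerProductSpace ℂ H] [CompleteSpace H]

/-!
In a C⋆-algebra the norm of a normal element equals its spectral radius. If `z ∉ σ(a)` with `a`
normal, the resolvent `(z - a)⁻¹` is normal and its spectrum is `{(z - μ)⁻¹ : μ ∈ σ(a)}`, so its
norm is at most `1 / dist(z, σ(a))`. Hence when `‖x‖ < dist(z, σ(a))`, the factorisation
`z - (a + x) = (z - a)(1 - (z - a)⁻¹ x)` exhibits `z - (a + x)` as a unit (Neumann series), so
`σ(a + x)` lies in the closed `‖x‖`-neighbourhood of `σ(a)`.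
-/

open scoped Pointwise

namespace spectrum

section BanachAlgebra

variable {A : Type*} [NormedRing A] [NormedAlgebra ℂ A] [CompleteSpace A]

theorem norm_le_inv_infDist_of_mem_inv {a : A} {z : ℂ} {u : Aˣ}
    (hu : (u : A) = algebraMap ℂ A z - a) {k : ℂ} (hk : k ∈ spectrum ℂ (↑u⁻¹ : A)) :
    ‖k‖ ≤ (infDist z (spectrum ℂ a))⁻¹ := by
  have hk0 : k ≠ 0 := ne_zero_of_mem_of_unit (a := u⁻¹) hk
  have hk' : k⁻¹ ∈ ({z} : Set ℂ) - spectrum ℂ a := by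
    rw [singleton_sub_eq, ← hu]
    exact inv₀_mem_iff.mpr hk
  obtain ⟨w, hw, μ, hμ, hzμ : w - μ = k⁻¹⟩ := hk'
  rw [Set.mem_singleton_iff.mp hw] at hzμ
  have hz : z ∉ spectrum ℂ a := notMem_iff.mpr (hu ▸ u.isUnit)
  have hpos : 0 < infDist z (spectrum ℂ a) :=
    ((spectrum.isClosed a).notMem_iff_infDist_pos ⟨μ, hμ⟩).mp hz
  have hle : infDist z (spectrum ℂ a) ≤ ‖k‖⁻¹ :=
    calc infDist z (spectrum ℂ a) ≤ dist z μ := infDist_le_dist_of_mem hμ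
      _ = ‖k‖⁻¹ := by rw [dist_eq_norm, hzμ, norm_inv]
  exact (le_inv_comm₀ hpos (norm_pos_iff.mpr hk0)).mp hle

theorem spectralRadius_inv_le_inv_infDist {a : A} {z : ℂ} {u : Aˣ}
    (hu : (u : A) = algebraMap ℂ A z - a) :
    spectralRadius ℂ (↑u⁻¹ : A) ≤ ENNReal.ofReal (infDist z (spectrum ℂ a))⁻¹ :=
  iSup₂_le fun k hk => by
    rw [← ENNReal.ofReal_coe_nnreal, coe_nnnorm]
    exact ENNReal.ofReal_le_ofReal (norm_le_inv_infDist_of_mem_inv hu hk)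

end BanachAlgebra

end spectrum

section CStarAlgebra

variable {A : Type*} [CStarAlgebra A]

instance IsStarNormal.algebraMap_sub (z : ℂ) (a : A) [IsStarNormal a] :
    IsStarNormal (algebraMap ℂ A z - a) where
  star_comm_self := by
    rw [star_sub, ← algebraMap_star_comm]
    exact (Algebra.commute_algebraMap_left _ _).sub_left
      ((Algebra.commute_algebraMap_right z _).sub_right (star_comm_self (x := a)))

theorem IsStarNormal.norm_inv_le_inv_infDist {a : A} [IsStarNormal a] {z : ℂ} {u : Aˣ}
    (hu : (u : A) = algebraMap ℂ A z - a) :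
    ‖(↑u⁻¹ : A)‖ ≤ (infDist z (spectrum ℂ a))⁻¹ := by
  have : IsStarNormal (u : A) := hu ▸ inferInstance
  have h := spectrum.spectralRadius_inv_le_inv_infDist hu
  rwa [IsStarNormal.spectralRadius_eq_nnnorm, ← ENNReal.ofReal_coe_nnreal, coe_nnnorm,
    ENNReal.ofReal_le_ofReal_iff (inv_nonneg.mpr infDist_nonneg)] at h

theorem IsStarNormal.notMem_spectrum_add {a : A} [IsStarNormal a] {x : A} {z : ℂ}
    (hx : ‖x‖ < infDist z (spectrum ℂ a)) : z ∉ spectrum ℂ (a + x) := by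
  have hpos : 0 < infDist z (spectrum ℂ a) := (norm_nonneg x).trans_lt hx
  obtain ⟨u, hu⟩ := spectrum.notMem_iff.mp fun hz => hpos.ne' (infDist_zero_of_mem hz)
  have hsmall : ‖(↑u⁻¹ : A) * x‖ < 1 :=
    calc ‖(↑u⁻¹ : A) * x‖ ≤ ‖(↑u⁻¹ : A)‖ * ‖x‖ := norm_mul_le _ _
      _ ≤ (infDist z (spectrum ℂ a))⁻¹ * ‖x‖ := by
        gcongr; exact IsStarNormal.norm_inv_le_inv_infDist hu
      _ < (infDist z (spectrum ℂ a))⁻¹ * infDist z (spectrum ℂ a) := by gcongr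
      _ = 1 := inv_mul_cancel₀ hpos.ne'
  have hfactor : algebraMap ℂ A z - (a + x) = u * (1 - (↑u⁻¹ : A) * x) := by
    rw [mul_sub, mul_one, ← mul_assoc, Units.mul_inv, one_mul, hu]
    abel
  rw [spectrum.notMem_iff, hfactor]
  exact u.isUnit.mul (Units.oneSub _ hsmall).isUnit

theorem IsStarNormal.spectrum_add_subset {a : A} [IsStarNormal a] (x : A) :
    spectrum ℂ (a + x) ⊆ {z | infDist z (spectrum ℂ a) ≤ ‖x‖} := fun _ hz =>
  not_lt.mp fun hx => IsStarNormal.notMem_spectrum_add hx hz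

end CStarAlgebra

theorem statement5_general (A : H →L[ℂ] H) (hA : IsSelfAdjoint A)
    (γ : ℝ → ℂ)
    (K : ℂ → H →L[ℂ] H)
    (X : H →L[ℂ] H) (hXn : ‖X‖ ≤ rMin A K γ) :
    spectrum ℂ (A + X) ⊆
      {z : ℂ | Metric.infDist z (spectrum ℂ A) ≤ rMin A K γ} := by
  have := hA.isStarNormal
  exact fun z hz => (IsStarNormal.spectrum_add_subset X hz).trans hXn

/-- `σ(H₁) ⊆ {z : dist(z, σ(A)) ≤ r_min}`. -/
theorem statement5 (A : H →L[ℂ] H) (hA : IsSelfAdjoint A)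
    (γ : ℝ → ℂ) (hγ : ContDiffOn ℝ 1 γ (Set.Icc 0 1))
    (hΓ : ∀ t ∈ Set.Icc (0:ℝ) 1, γ t ∉ spectrum ℂ A)
    (K : ℂ → H →L[ℂ] H) (hK : ContinuousOn (fun t => K (γ t)) (Set.Icc 0 1))
    (hV : curveVar K γ < (curveDist A γ) ^ 2 / 4)
    (X : H →L[ℂ] H) (hXn : ‖X‖ ≤ rMin A K γ)
    (hXσ : Disjoint (spectrum ℂ (A + X)) (γ '' Set.Icc (0:ℝ) 1))
    (hX : X = Vmap K γ (A + X)) :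
    spectrum ℂ (A + X) ⊆
      {z : ℂ | Metric.infDist z (spectrum ℂ A) ≤ rMin A K γ} :=
  statement5_general A hA γ K X hXn
end
end

section
/- Assume V₀ < d₀²/4, let X be the unique solution of X = V(A + X) with ‖X‖ ≤ r_min, and set H₁ = A + X. Then for every z ∈ ℂ with dist(z, σ(A)) ≤ d₀/2, the operator M(z) = A − z + ∫₀¹ γ'(t) (z − γ(t))⁻¹ · K(γ(t)) dt is boundedly invertible on H if and only if z ∉ σ(H₁). In other words, inside the closed d₀/2-neighborhood of σ(A) the spectrum of the continued transfer function M coincides exactly with the spectrum of H₁ (including the complex spectrum, in particular the resonances). -/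
/-!
Write `H₁ = A + X`. As `A` is normal and `‖X‖ < d₀/2`, the resolvent of `H₁` is bounded by `2/d₀`
along the curve, and `|z - γ t| ≥ d₀/2` when `z` lies within `d₀/2` of `σ(A)`. The fixed-point
equation `X = V(H₁)` and the resolvent identity
`(z - γ)⁻¹ K (H₁ - γ)⁻¹ (H₁ - z) = (z - γ)⁻¹ K - K (H₁ - γ)⁻¹` give the factorisation
`M(z) = (1 + Q(z)) (H₁ - z)` with `Q(z) = ∫ γ' (z - γ)⁻¹ K (H₁ - γ)⁻¹`, and `‖Q(z)‖ ≤ 4 V₀ / d₀² < 1`.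
So `1 + Q(z)` is invertible, and `M(z)` is invertible exactly when `H₁ - z` is.
-/

open MeasureTheory Metric Set

noncomputable section

variable {H : Type*} [NormedAddCommGroup H] [InnerProductSpace ℂ H] [CompleteSpace H]

theorem spectrum.notMem_iff_isUnit_sub_smul_one {R A : Type*} [CommRing R] [Ring A] [Algebra R A]
    {a : A} {r : R} : r ∉ spectrum R a ↔ IsUnit (a - r • 1) := by
  rw [spectrum.notMem_iff, Algebra.algebraMap_eq_smul_one, ← IsUnit.neg_iff, neg_sub]

section NormedRing

variable {R : Type*} [NormedRing R]

theorem Units.norm_ringInverse_add_mul_le (u : Rˣ) {x : R} (hux : IsUnit (↑u + x)) :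
    ‖Ring.inverse (↑u + x)‖ * (1 - ‖(↑u⁻¹ : R)‖ * ‖x‖) ≤ ‖(↑u⁻¹ : R)‖ := by
  set b := Ring.inverse (↑u + x)
  have hb : b = ↑u⁻¹ - (↑u⁻¹ : R) * x * b := by
    have h := congrArg ((↑u⁻¹ : R) * ·) (Ring.mul_inverse_cancel _ hux)
    simp only [add_mul, mul_add, mul_one, u.inv_mul_cancel_left, ← mul_assoc] at h
    exact eq_sub_of_add_eq h
  have hnorm : ‖b‖ ≤ ‖(↑u⁻¹ : R)‖ + ‖(↑u⁻¹ : R)‖ * ‖x‖ * ‖b‖ :=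
    calc ‖b‖ = ‖↑u⁻¹ - (↑u⁻¹ : R) * x * b‖ := congrArg norm hb
      _ ≤ ‖(↑u⁻¹ : R)‖ + ‖(↑u⁻¹ : R) * x * b‖ := norm_sub_le _ _
      _ ≤ ‖(↑u⁻¹ : R)‖ + ‖(↑u⁻¹ : R)‖ * ‖x‖ * ‖b‖ := by grw [norm_mul₃_le]
  linarith

theorem Units.isUnit_add_of_norm_mul_lt_one [HasSummableGeomSeries R] (u : Rˣ) {x : R}
    (h : ‖(↑u⁻¹ : R)‖ * ‖x‖ < 1) : IsUnit (↑u + x) := by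
  nontriviality R
  have hx : ‖x‖ < ‖(↑u⁻¹ : R)‖⁻¹ := by
    rwa [← lt_inv_mul_iff₀ (Units.norm_pos u⁻¹), mul_one] at h
  exact ⟨u.add x hx, rfl⟩

theorem ContinuousOn.ringInverse [HasSummableGeomSeries R] {α : Type*} [TopologicalSpace α]
    {f : α → R} {s : Set α} (hf : ContinuousOn f s) (hu : ∀ x ∈ s, IsUnit (f x)) :
    ContinuousOn (fun x => Ring.inverse (f x)) s := fun x hx =>
  ((hu x hx).unit_spec ▸ NormedRing.inverse_continuousAt (hu x hx).unit).comp_continuousWithinAt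
    (hf x hx)

end NormedRing

-- For `z ∈ σ(a)` both sides are `0`: `Ring.inverse` of a non-unit, and `0⁻¹`.
theorem norm_ringInverse_sub_smul_one_le {A : Type*} [CStarAlgebra A] (a : A) [IsStarNormal a]
    (z : ℂ) : ‖Ring.inverse (a - z • (1 : A))‖ ≤ (infDist z (spectrum ℂ a))⁻¹ := by
  have hcfc : cfc (fun x : ℂ => x - z) a = a - z • 1 := by
    rw [cfc_sub .., cfc_id' .., cfc_const .., Algebra.algebraMap_eq_smul_one]
  by_cases hz : z ∈ spectrum ℂ a
  · rw [← hcfc, Ring.inverse_non_unit _ fun h => ?_, norm_zero]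
    · exact inv_nonneg.mpr infDist_nonneg
    · rw [isUnit_cfc_iff (fun x => x - z) a] at h
      simpa using h z hz
  have hne : ∀ x ∈ spectrum ℂ a, x - z ≠ 0 := fun x hx h => hz (sub_eq_zero.mp h ▸ hx)
  rw [← hcfc, ← cfc_inv _ a hne]
  refine norm_cfc_le (inv_nonneg.mpr infDist_nonneg) fun x hx => ?_
  rw [norm_inv, ← dist_eq_norm, dist_comm]
  exact inv_anti₀ ((spectrum.isClosed a).notMem_iff_infDist_pos ⟨x, hx⟩ |>.mp hz)
    (infDist_le_dist_of_mem hx)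

theorem isUnit_and_norm_ringInverse_add_sub_smul_one_le {A : Type*} [CStarAlgebra A] (a : A)
    [IsStarNormal a] {x : A} {w : ℂ} {d : ℝ} (hd : 0 < d)
    (hw : d ≤ infDist w (spectrum ℂ a)) (hx : ‖x‖ ≤ d / 2) :
    IsUnit (a + x - w • 1) ∧ ‖Ring.inverse (a + x - w • 1)‖ ≤ 2 / d := by
  have hwσ : w ∉ spectrum ℂ a := fun h => by
    rw [infDist_zero_of_mem h] at hw; linarith
  have hu : IsUnit (a - w • 1) :=
    spectrum.notMem_iff_isUnit_sub_smul_one.mp hwσ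
  set u := hu.unit
  have hu_inv : ‖(↑u⁻¹ : A)‖ ≤ d⁻¹ := by
    rw [← Ring.inverse_unit, IsUnit.unit_spec]
    exact (norm_ringInverse_sub_smul_one_le a w).trans (inv_anti₀ hd hw)
  have hux : ‖(↑u⁻¹ : A)‖ * ‖x‖ ≤ 1 / 2 :=
    calc ‖(↑u⁻¹ : A)‖ * ‖x‖ ≤ d⁻¹ * (d / 2) := by gcongr
      _ = 1 / 2 := by field_simp
  rw [show a + x - w • 1 = ↑u + x by rw [IsUnit.unit_spec]; abel]
  have hunit := u.isUnit_add_of_norm_mul_lt_one (x := x) (by linarith)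
  refine ⟨hunit, ?_⟩
  have hb := u.norm_ringInverse_add_mul_le hunit
  have hb0 := norm_nonneg (Ring.inverse (↑u + x))
  rw [div_eq_mul_inv]
  nlinarith

section Curve

variable {E : Type*} [NormedAddCommGroup E] [InnerProductSpace ℂ E]
  {A : E →L[ℂ] E} {K : ℂ → E →L[ℂ] E} {γ : ℝ → ℂ}

theorem curveDist_le_infDist {t : ℝ} (ht : t ∈ Icc (0:ℝ) 1) :
    curveDist A γ ≤ infDist (γ t) (spectrum ℂ A) :=
  ciInf_le ⟨0, by rintro _ ⟨s, rfl⟩; exact infDist_nonneg⟩ (⟨t, ht⟩ : Icc (0:ℝ) 1)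

theorem curveDist_pos_of_curveVar_lt (hV : curveVar K γ < curveDist A γ ^ 2 / 4) :
    0 < curveDist A γ := by
  have hV₀ : 0 ≤ curveVar K γ :=
    intervalIntegral.integral_nonneg zero_le_one fun t _ => by positivity
  have hd₀ : 0 ≤ curveDist A γ := Real.iInf_nonneg fun t => infDist_nonneg
  refine hd₀.lt_of_ne fun h => ?_
  rw [← h] at hV
  linarith

theorem norm_lt_half_curveDist_of_le_rMin (hV : curveVar K γ < curveDist A γ ^ 2 / 4)
    {X : E →L[ℂ] E} (hX : ‖X‖ ≤ rMin A K γ) : ‖X‖ < curveDist A γ / 2 := by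
  have hsqrt : 0 < Real.sqrt (curveDist A γ ^ 2 / 4 - curveVar K γ) :=
    Real.sqrt_pos.mpr (by linarith)
  rw [rMin] at hX
  linarith

theorem half_curveDist_le_norm_sub {z : ℂ} (hz : infDist z (spectrum ℂ A) ≤ curveDist A γ / 2)
    {t : ℝ} (ht : t ∈ Icc (0:ℝ) 1) : curveDist A γ / 2 ≤ ‖z - γ t‖ := by
  have h := infDist_le_infDist_add_dist (x := γ t) (y := z) (s := spectrum ℂ A)
  rw [dist_eq_norm'] at h
  linarith [curveDist_le_infDist (A := A) (γ := γ) ht]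

theorem four_mul_curveVar_div_curveDist_sq_lt_one (hV : curveVar K γ < curveDist A γ ^ 2 / 4) :
    4 * curveVar K γ / curveDist A γ ^ 2 < 1 := by
  have hd := curveDist_pos_of_curveVar_lt hV
  rw [div_lt_one (by positivity)]
  linarith

end Curve

section TransferFunction

variable {A : H →L[ℂ] H} {K : ℂ → H →L[ℂ] H} {γ : ℝ → ℂ}

def transferFactor (K : ℂ → H →L[ℂ] H) (γ : ℝ → ℂ) (Y : H →L[ℂ] H) (z : ℂ) : H →L[ℂ] H :=
  ∫ t in (0:ℝ)..1, (derivWithin γ (Icc 0 1) t * (z - γ t)⁻¹) •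
    (K (γ t) * Ring.inverse (Y - γ t • (1 : H →L[ℂ] H)))

theorem V1_sub_Vmap_eq_transferFactor_mul (hγ : ContDiffOn ℝ 1 γ (Icc 0 1))
    (hK : ContinuousOn (fun t => K (γ t)) (Icc 0 1)) {Y : H →L[ℂ] H}
    (hY : ∀ t ∈ Icc (0:ℝ) 1, IsUnit (Y - γ t • 1)) {z : ℂ} (hz : ∀ t ∈ Icc (0:ℝ) 1, z ≠ γ t) :
    V1 K γ z - Vmap K γ Y = transferFactor K γ Y z * (Y - z • 1) := by
  set R : ℝ → H →L[ℂ] H := fun t => Ring.inverse (Y - γ t • 1)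
  have hγ' : ContinuousOn (derivWithin γ (Icc 0 1)) (Icc 0 1) :=
    hγ.continuousOn_derivWithin (uniqueDiffOn_Icc zero_lt_one) le_rfl
  have hR : ContinuousOn R (Icc 0 1) :=
    (continuousOn_const.sub (hγ.continuousOn.smul continuousOn_const)).ringInverse hY
  have hzγ : ContinuousOn (fun t => (z - γ t)⁻¹) (Icc 0 1) :=
    (continuousOn_const.sub hγ.continuousOn).inv₀ fun t ht => sub_ne_zero.mpr (hz t ht)
  have hpointwise : ∀ t ∈ uIcc (0:ℝ) 1,
      (derivWithin γ (Icc 0 1) t * (z - γ t)⁻¹) • K (γ t)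
        - derivWithin γ (Icc 0 1) t • (K (γ t) ∘L R t)
      = (derivWithin γ (Icc 0 1) t * (z - γ t)⁻¹) • (K (γ t) * R t) * (Y - z • 1) := by
    intro t ht
    rw [uIcc_of_le zero_le_one] at ht
    have hRY : R t * (Y - z • 1) = 1 - (z - γ t) • R t := by
      rw [show Y - z • 1 = (Y - γ t • 1) - (z - γ t) • (1 : H →L[ℂ] H) by rw [sub_smul]; abel,
        mul_sub, Ring.inverse_mul_cancel _ (hY t ht), mul_smul_comm, mul_one]
    rw [smul_mul_assoc, mul_assoc, hRY, mul_sub, mul_one, mul_smul_comm, smul_sub, smul_smul,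
      mul_assoc, inv_mul_cancel₀ (sub_ne_zero.mpr (hz t ht)), mul_one]
    rfl
  calc V1 K γ z - Vmap K γ Y
      = ∫ t in (0:ℝ)..1, ((derivWithin γ (Icc 0 1) t * (z - γ t)⁻¹) • K (γ t)
          - derivWithin γ (Icc 0 1) t • (K (γ t) ∘L R t)) :=
        (intervalIntegral.integral_sub
          (((hγ'.mul hzγ).smul hK).intervalIntegrable_of_Icc zero_le_one)
          ((hγ'.smul (hK.mul hR)).intervalIntegrable_of_Icc zero_le_one)).symm
    _ = ∫ t in (0:ℝ)..1,
          (derivWithin γ (Icc 0 1) t * (z - γ t)⁻¹) • (K (γ t) * R t) * (Y - z • 1) :=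
        intervalIntegral.integral_congr hpointwise
    _ = transferFactor K γ Y z * (Y - z • 1) :=
        ((ContinuousLinearMap.mul ℂ _).flip (Y - z • 1)).intervalIntegral_comp_comm
          (((hγ'.mul hzγ).smul (hK.mul hR)).intervalIntegrable_of_Icc zero_le_one)

theorem norm_transferFactor_le (hγ : ContDiffOn ℝ 1 γ (Icc 0 1))
    (hK : ContinuousOn (fun t => K (γ t)) (Icc 0 1)) {Y : H →L[ℂ] H} {z : ℂ} {ρ σ : ℝ}
    (hR : ∀ t ∈ Icc (0:ℝ) 1, ‖Ring.inverse (Y - γ t • 1)‖ ≤ ρ)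
    (hz : ∀ t ∈ Icc (0:ℝ) 1, ‖(z - γ t)⁻¹‖ ≤ σ) :
    ‖transferFactor K γ Y z‖ ≤ σ * ρ * curveVar K γ := by
  have hγ' : ContinuousOn (derivWithin γ (Icc 0 1)) (Icc 0 1) :=
    hγ.continuousOn_derivWithin (uniqueDiffOn_Icc zero_lt_one) le_rfl
  rw [curveVar, ← intervalIntegral.integral_const_mul]
  refine intervalIntegral.norm_integral_le_of_norm_le zero_le_one
    (Filter.Eventually.of_forall fun t ht => ?_)
    ((continuousOn_const.mul (hγ'.norm.mul hK.norm)).intervalIntegrable_of_Icc zero_le_one)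
  have ht' : t ∈ Icc (0:ℝ) 1 := Ioc_subset_Icc_self ht
  have hσ : 0 ≤ σ := (norm_nonneg _).trans (hz t ht')
  calc ‖(derivWithin γ (Icc 0 1) t * (z - γ t)⁻¹) • (K (γ t) * Ring.inverse (Y - γ t • 1))‖
      ≤ ‖derivWithin γ (Icc 0 1) t‖ * ‖(z - γ t)⁻¹‖ *
          (‖K (γ t)‖ * ‖Ring.inverse (Y - γ t • 1)‖) := by
        rw [norm_smul, norm_mul]; gcongr; exact norm_mul_le _ _
    _ ≤ ‖derivWithin γ (Icc 0 1) t‖ * σ * (‖K (γ t)‖ * ρ) := by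
        gcongr
        · exact hz t ht'
        · exact hR t ht'
    _ = σ * ρ * (‖derivWithin γ (Icc 0 1) t‖ * ‖K (γ t)‖) := by ring

theorem Mfun_eq_one_add_transferFactor_mul (hγ : ContDiffOn ℝ 1 γ (Icc 0 1))
    (hK : ContinuousOn (fun t => K (γ t)) (Icc 0 1)) {X : H →L[ℂ] H}
    (hX : X = Vmap K γ (A + X)) (hY : ∀ t ∈ Icc (0:ℝ) 1, IsUnit (A + X - γ t • 1)) {z : ℂ}
    (hz : ∀ t ∈ Icc (0:ℝ) 1, z ≠ γ t) :
    Mfun A K γ z = (1 + transferFactor K γ (A + X) z) * (A + X - z • 1) := by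
  have h := V1_sub_Vmap_eq_transferFactor_mul hγ hK hY hz
  rw [← hX] at h
  rw [Mfun, add_mul, one_mul, ← h]
  abel

end TransferFunction

theorem statement6_general (A : H →L[ℂ] H) (hA : IsSelfAdjoint A)
    (γ : ℝ → ℂ) (hγ : ContDiffOn ℝ 1 γ (Set.Icc 0 1))
    (K : ℂ → H →L[ℂ] H) (hK : ContinuousOn (fun t => K (γ t)) (Set.Icc 0 1))
    (hV : curveVar K γ < (curveDist A γ) ^ 2 / 4)
    (X : H →L[ℂ] H) (hXn : ‖X‖ ≤ rMin A K γ)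
    (hX : X = Vmap K γ (A + X)) :
    ∀ z : ℂ, Metric.infDist z (spectrum ℂ A) ≤ curveDist A γ / 2 →
      (IsUnit (Mfun A K γ z) ↔ z ∉ spectrum ℂ (A + X)) := by
  intro z hz
  have : IsStarNormal A := hA.isStarNormal
  set d := curveDist A γ
  have hd : 0 < d := curveDist_pos_of_curveVar_lt hV
  have hres (t : ℝ) (ht : t ∈ Icc (0:ℝ) 1) :
      IsUnit (A + X - γ t • 1) ∧ ‖Ring.inverse (A + X - γ t • 1)‖ ≤ 2 / d :=
    isUnit_and_norm_ringInverse_add_sub_smul_one_le A hd (curveDist_le_infDist ht)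
      (norm_lt_half_curveDist_of_le_rMin hV hXn).le
  have hzγ (t : ℝ) (ht : t ∈ Icc (0:ℝ) 1) : ‖(z - γ t)⁻¹‖ ≤ 2 / d := by
    rw [norm_inv, ← inv_div]
    exact inv_anti₀ (by positivity) (half_curveDist_le_norm_sub hz ht)
  have hz_off (t : ℝ) (ht : t ∈ Icc (0:ℝ) 1) : z ≠ γ t := fun h => by
    have := half_curveDist_le_norm_sub hz ht
    rw [h, sub_self, norm_zero] at this
    linarith
  have hQ : ‖transferFactor K γ (A + X) z‖ < 1 :=
    calc ‖transferFactor K γ (A + X) z‖ ≤ 2 / d * (2 / d) * curveVar K γ :=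
          norm_transferFactor_le hγ hK (fun t ht => (hres t ht).2) hzγ
      _ = 4 * curveVar K γ / d ^ 2 := by ring
      _ < 1 := four_mul_curveVar_div_curveDist_sq_lt_one hV
  have hQ_unit : IsUnit (1 + transferFactor K γ (A + X) z) := by
    simpa using isUnit_one_sub_of_norm_lt_one (x := -transferFactor K γ (A + X) z) (by simpa)
  rw [Mfun_eq_one_add_transferFactor_mul hγ hK hX (fun t ht => (hres t ht).1) hz_off,
    hQ_unit.mul_left_iff, spectrum.notMem_iff_isUnit_sub_smul_one]

/-- inside the closed `d₀/2`-neighborhood of `σ(A)` the spectrum of the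
continued transfer function `M` coincides exactly with the spectrum of `H₁ = A + X`. -/
theorem statement6 (A : H →L[ℂ] H) (hA : IsSelfAdjoint A)
    (γ : ℝ → ℂ) (hγ : ContDiffOn ℝ 1 γ (Set.Icc 0 1))
    (hΓ : ∀ t ∈ Set.Icc (0:ℝ) 1, γ t ∉ spectrum ℂ A)
    (K : ℂ → H →L[ℂ] H) (hK : ContinuousOn (fun t => K (γ t)) (Set.Icc 0 1))
    (hV : curveVar K γ < (curveDist A γ) ^ 2 / 4)
    (X : H →L[ℂ] H) (hXn : ‖X‖ ≤ rMin A K γ)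
    (hXσ : Disjoint (spectrum ℂ (A + X)) (γ '' Set.Icc (0:ℝ) 1))
    (hX : X = Vmap K γ (A + X)) :
    ∀ z : ℂ, Metric.infDist z (spectrum ℂ A) ≤ curveDist A γ / 2 →
      (IsUnit (Mfun A K γ z) ↔ z ∉ spectrum ℂ (A + X)) :=
  statement6_general A hA γ hγ K hK hV X hXn hX

end
end

section
/- For every z ∈ ℂ ∖ D one has ∫_a^b (1 + i·g'(x)) (z − x − i·g(x))⁻¹ · K(x + i·g(x)) dx = ∫_a^b (z − x)⁻¹ · K(x) dx; that is, outside the region D enclosed between the real interval [a,b] and the deformed contour Γ, the contour-deformed integral coincides with the original one. -/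
/-!
Pull the form `f(w) dw`, `f(w) = (z - w)⁻¹ K(w)`, back along the straight-line homotopy
`w(x, t) = x + t·i·g(x)` on `[a,b] × [0,1]`, which stays in the open set where `f` is holomorphic.
Holomorphy makes the pulled-back form `P dx + Q dt` closed, `∂ₜP = ∂ₓQ`, so by Fubini and the
fundamental theorem of calculus its integral over the boundary of the rectangle vanishes. The
vertical sides contribute nothing because `g(a) = g(b) = 0`; the horizontal sides are the two
integrals of the theorem.
-/

open MeasureTheory Set Complex

noncomputable section

variable {H : Type*} [NormedAddCommGroup H] [InnerProductSpace ℂ H] [CompleteSpace H]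

/-- The compact region `D` between the real interval `[a,b]` and the deformed
contour `Γ = {x + i g(x) : x ∈ [a,b]}` (here `g ≤ 0` on `[a,b]`). -/
def regionD (a b : ℝ) (g : ℝ → ℝ) : Set ℂ :=
  {z : ℂ | z.re ∈ Set.Icc a b ∧ z.im ∈ Set.Icc (g z.re) 0}

section Rectangle

variable {E : Type*} [NormedAddCommGroup E] [NormedSpace ℝ E] {a b c d : ℝ}

theorem integral_integral_swap_of_continuousOn {R : ℝ → ℝ → E} (hab : a ≤ b) (hcd : c ≤ d)
    (hR : ContinuousOn (Function.uncurry R) (Icc a b ×ˢ Icc c d)) :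
    ∫ x in a..b, ∫ t in c..d, R x t = ∫ t in c..d, ∫ x in a..b, R x t := by
  have hint : Integrable (Function.uncurry R)
      ((volume.restrict (Ioc a b)).prod (volume.restrict (Ioc c d))) := by
    rw [Measure.prod_restrict, ← Measure.volume_eq_prod]
    exact (hR.integrableOn_compact (isCompact_Icc.prod isCompact_Icc)).mono_set
      (prod_mono Ioc_subset_Icc_self Ioc_subset_Icc_self)
  simp only [intervalIntegral.integral_of_le hab, intervalIntegral.integral_of_le hcd]
  exact integral_integral_swap hint

theorem integral_sub_eq_integral_sub_of_hasDerivAt [CompleteSpace E] {P Q R : ℝ → ℝ → E}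
    (hab : a ≤ b) (hcd : c ≤ d)
    (hP : ∀ x ∈ Icc a b, ∀ t ∈ Icc c d, HasDerivAt (P x) (R x t) t)
    (hQ : ∀ x ∈ Icc a b, ∀ t ∈ Icc c d, HasDerivAt (Q · t) (R x t) x)
    (hR : ContinuousOn (Function.uncurry R) (Icc a b ×ˢ Icc c d)) :
    ∫ x in a..b, (P x d - P x c) = ∫ t in c..d, (Q b t - Q a t) := by
  calc ∫ x in a..b, (P x d - P x c) = ∫ x in a..b, ∫ t in c..d, R x t := by
        refine intervalIntegral.integral_congr fun x hx => ?_
        rw [uIcc_of_le hab] at hx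
        refine (intervalIntegral.integral_eq_sub_of_hasDerivAt (fun t ht => ?_)
          ((hR.uncurry_left x hx).intervalIntegrable_of_Icc hcd)).symm
        rw [uIcc_of_le hcd] at ht
        exact hP x hx t ht
    _ = ∫ t in c..d, ∫ x in a..b, R x t := integral_integral_swap_of_continuousOn hab hcd hR
    _ = ∫ t in c..d, (Q b t - Q a t) := by
        refine intervalIntegral.integral_congr fun t ht => ?_
        rw [uIcc_of_le hcd] at ht
        refine intervalIntegral.integral_eq_sub_of_hasDerivAt (f := (Q · t)) (fun x hx => ?_)
          ((hR.uncurry_right t ht).intervalIntegrable_of_Icc hab)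
        rw [uIcc_of_le hab] at hx
        exact hQ x hx t ht

end Rectangle

section LineHomotopy

variable {E : Type*} [NormedAddCommGroup E] [NormedSpace ℂ E] {γ₀ γ₁ γ₀' γ₁' : ℝ → ℂ}

def lineHomotopy (γ₀ γ₁ : ℝ → ℂ) (x t : ℝ) : ℂ := γ₀ x + t * (γ₁ x - γ₀ x)

@[simp]
theorem lineHomotopy_zero (x : ℝ) : lineHomotopy γ₀ γ₁ x 0 = γ₀ x := by
  simp [lineHomotopy]

@[simp]
theorem lineHomotopy_one (x : ℝ) : lineHomotopy γ₀ γ₁ x 1 = γ₁ x := by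
  simp [lineHomotopy]

theorem hasDerivAt_lineHomotopy_right (x t : ℝ) :
    HasDerivAt (lineHomotopy γ₀ γ₁ x) (γ₁ x - γ₀ x) t := by
  unfold lineHomotopy
  simpa using (hasDerivAt_id t).ofReal_comp.mul_const (γ₁ x - γ₀ x)

theorem hasDerivAt_lineHomotopy_left {x : ℝ} (hγ₀ : HasDerivAt γ₀ (γ₀' x) x)
    (hγ₁ : HasDerivAt γ₁ (γ₁' x) x) (t : ℝ) :
    HasDerivAt (lineHomotopy γ₀ γ₁ · t) (lineHomotopy γ₀' γ₁' x t) x :=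
  hγ₀.add ((hγ₁.sub hγ₀).const_mul (t : ℂ))

theorem ContinuousOn.lineHomotopy {s t : Set ℝ} (hγ₀ : ContinuousOn γ₀ s)
    (hγ₁ : ContinuousOn γ₁ s) : ContinuousOn (Function.uncurry (lineHomotopy γ₀ γ₁)) (s ×ˢ t) := by
  have hfst : MapsTo Prod.fst (s ×ˢ t) s := fun p hp => hp.1
  have hγ₀' := hγ₀.comp continuousOn_fst hfst
  have hγ₁' := hγ₁.comp continuousOn_fst hfst
  exact hγ₀'.add ((continuous_ofReal.comp continuous_snd).continuousOn.mul (hγ₁'.sub hγ₀'))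

/-- Along `w = lineHomotopy γ₀ γ₁` the form `f(w) dw` pulls back to `P dx + Q dt` with
`P = lineHomotopy γ₀' γ₁' • f ∘ w` and `Q = (γ₁ - γ₀) • f ∘ w`; the two derivatives are `∂ₜP` and
`∂ₓQ`, and their equality says that this form is closed. -/
theorem hasDerivAt_pullback_lineHomotopy {f : ℂ → E} {f' : E} {x t : ℝ}
    (hf : HasDerivAt f f' (lineHomotopy γ₀ γ₁ x t))
    (hγ₀ : HasDerivAt γ₀ (γ₀' x) x) (hγ₁ : HasDerivAt γ₁ (γ₁' x) x) :
    HasDerivAt (fun s => lineHomotopy γ₀' γ₁' x s • f (lineHomotopy γ₀ γ₁ x s))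
        ((γ₁' x - γ₀' x) • f (lineHomotopy γ₀ γ₁ x t) +
          (lineHomotopy γ₀' γ₁' x t * (γ₁ x - γ₀ x)) • f') t ∧
      HasDerivAt (fun y => (γ₁ y - γ₀ y) • f (lineHomotopy γ₀ γ₁ y t))
        ((γ₁' x - γ₀' x) • f (lineHomotopy γ₀ γ₁ x t) +
          (lineHomotopy γ₀' γ₁' x t * (γ₁ x - γ₀ x)) • f') x := by
  constructor
  · refine ((hasDerivAt_lineHomotopy_right x t).smul
      (hf.scomp t (hasDerivAt_lineHomotopy_right x t))).congr_deriv ?_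
    rw [smul_smul, add_comm]
    rfl
  · refine ((hγ₁.sub hγ₀).smul
      (hf.scomp x (hasDerivAt_lineHomotopy_left hγ₀ hγ₁ t))).congr_deriv ?_
    rw [smul_smul, mul_comm, add_comm]
    rfl

theorem integral_smul_comp_eq_of_lineHomotopy [CompleteSpace E] {f : ℂ → E} {V : Set ℂ}
    {a b : ℝ} (hab : a ≤ b) (hV : IsOpen V) (hf : DifferentiableOn ℂ f V)
    (hγ₀ : ∀ x ∈ Icc a b, HasDerivAt γ₀ (γ₀' x) x) (hγ₁ : ∀ x ∈ Icc a b, HasDerivAt γ₁ (γ₁' x) x)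
    (hγ₀' : ContinuousOn γ₀' (Icc a b)) (hγ₁' : ContinuousOn γ₁' (Icc a b))
    (hmem : ∀ x ∈ Icc a b, ∀ t ∈ Icc (0 : ℝ) 1, lineHomotopy γ₀ γ₁ x t ∈ V)
    (ha : γ₀ a = γ₁ a) (hb : γ₀ b = γ₁ b) :
    ∫ x in a..b, γ₁' x • f (γ₁ x) = ∫ x in a..b, γ₀' x • f (γ₀ x) := by
  set S := Icc a b ×ˢ Icc (0 : ℝ) 1
  set w := lineHomotopy γ₀ γ₁
  set P : ℝ → ℝ → E := fun x t => lineHomotopy γ₀' γ₁' x t • f (w x t)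
  set R : ℝ → ℝ → E := fun x t => (γ₁' x - γ₀' x) • f (w x t) +
    (lineHomotopy γ₀' γ₁' x t * (γ₁ x - γ₀ x)) • deriv f (w x t)
  have hPQ (x : ℝ) (hx : x ∈ Icc a b) (t : ℝ) (ht : t ∈ Icc (0 : ℝ) 1) :=
    hasDerivAt_pullback_lineHomotopy
      (hf.differentiableAt (hV.mem_nhds (hmem x hx t ht))).hasDerivAt (hγ₀ x hx) (hγ₁ x hx)
  have hγ₀c : ContinuousOn γ₀ (Icc a b) := HasDerivAt.continuousOn hγ₀
  have hγ₁c : ContinuousOn γ₁ (Icc a b) := HasDerivAt.continuousOn hγ₁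
  have hwS : ContinuousOn (Function.uncurry w) S := hγ₀c.lineHomotopy hγ₁c
  have hwV : MapsTo (Function.uncurry w) S V := fun p hp => hmem _ hp.1 _ hp.2
  have hfS := hf.continuousOn.comp hwS hwV
  have hf'S := (hf.deriv hV).continuousOn.comp hwS hwV
  have hwxS : ContinuousOn (Function.uncurry (lineHomotopy γ₀' γ₁')) S := hγ₀'.lineHomotopy hγ₁'
  have hΔS : ContinuousOn (fun p : ℝ × ℝ => γ₁ p.1 - γ₀ p.1) S :=
    (hγ₁c.sub hγ₀c).comp continuousOn_fst fun p hp => hp.1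
  have hΔ'S : ContinuousOn (fun p : ℝ × ℝ => γ₁' p.1 - γ₀' p.1) S :=
    (hγ₁'.sub hγ₀').comp continuousOn_fst fun p hp => hp.1
  have hR : ContinuousOn (Function.uncurry R) S :=
    (hΔ'S.smul hfS).add ((hwxS.mul hΔS).smul hf'S)
  have hPi (t : ℝ) (ht : t ∈ Icc (0 : ℝ) 1) : IntervalIntegrable (P · t) volume a b :=
    ((hwxS.smul hfS).uncurry_right (f := P) t ht).intervalIntegrable_of_Icc hab
  have hboundary := integral_sub_eq_integral_sub_of_hasDerivAt hab zero_le_one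
    (fun x hx t ht => (hPQ x hx t ht).1) (fun x hx t ht => (hPQ x hx t ht).2) hR
  simp only [ha, hb, sub_self, zero_smul, intervalIntegral.integral_zero] at hboundary
  rw [intervalIntegral.integral_sub (hPi 1 (by simp)) (hPi 0 (by simp)), sub_eq_zero] at hboundary
  simpa [P, w] using hboundary

end LineHomotopy

theorem ofReal_add_mul_I_mem_regionD {a b : ℝ} {g : ℝ → ℝ} {x t : ℝ} (hx : x ∈ Icc a b)
    (ht : t ∈ Icc (0 : ℝ) 1) (hgx : g x ≤ 0) : (x : ℂ) + t * (I * g x) ∈ regionD a b g := by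
  have hre : ((x : ℂ) + t * (I * g x)).re = x := by simp
  have him : ((x : ℂ) + t * (I * g x)).im = t * g x := by simp
  simp only [regionD, mem_ofPred_eq, hre, him]
  exact ⟨hx, by nlinarith [ht.2], mul_nonpos_of_nonneg_of_nonpos ht.1 hgx⟩

theorem statement14_general (a b : ℝ) (hab : a < b)
    (g : ℝ → ℝ) (hg : ContDiff ℝ 1 g) (hga : g a = 0) (hgb : g b = 0)
    (hgneg : ∀ x ∈ Set.Icc a b, g x ≤ 0)
    (K : ℂ → H →L[ℂ] H) (U : Set ℂ) (hU : IsOpen U) (hDU : regionD a b g ⊆ U)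
    (hKd : ∀ z ∈ U, DifferentiableAt ℂ K z)
    (z : ℂ) (hz : z ∉ regionD a b g) :
    (∫ x in a..b, ((1 + Complex.I * Complex.ofReal (deriv g x)) *
        (z - (x : ℂ) - Complex.I * Complex.ofReal (g x))⁻¹) •
        K ((x : ℂ) + Complex.I * Complex.ofReal (g x)))
      = ∫ x in a..b, ((z - (x : ℂ))⁻¹) • K (x : ℂ) := by
  set f : ℂ → H →L[ℂ] H := fun w => (z - w)⁻¹ • K w
  have hf : DifferentiableOn ℂ f (U \ {z}) := fun w hw =>
    ((((differentiableAt_const z).sub differentiableAt_id).inv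
      (sub_ne_zero.2 (Ne.symm hw.2))).smul (hKd w hw.1)).differentiableWithinAt
  have hγ₀ (x : ℝ) : HasDerivAt (fun x : ℝ => (x : ℂ)) 1 x := (hasDerivAt_id x).ofReal_comp
  have hγ₁ (x : ℝ) : HasDerivAt (fun x : ℝ => (x : ℂ) + I * g x) (1 + I * deriv g x) x :=
    (hγ₀ x).add (((hg.differentiable one_ne_zero x).hasDerivAt.ofReal_comp).const_mul I)
  have hγ₁' : Continuous fun x => 1 + I * ((deriv g x : ℝ) : ℂ) := by
    have := hg.continuous_deriv le_rfl
    fun_prop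
  have hmem : ∀ x ∈ Icc a b, ∀ t ∈ Icc (0 : ℝ) 1,
      lineHomotopy (fun x : ℝ => (x : ℂ)) (fun x => x + I * g x) x t ∈ U \ {z} := by
    intro x hx t ht
    rw [lineHomotopy, add_sub_cancel_left]
    have hD := ofReal_add_mul_I_mem_regionD hx ht (hgneg x hx)
    exact ⟨hDU hD, fun hzD => hz (mem_singleton_iff.1 hzD ▸ hD)⟩
  have hdeform := integral_smul_comp_eq_of_lineHomotopy hab.le (hU.sdiff isClosed_singleton) hf
    (fun x _ => hγ₀ x) (fun x _ => hγ₁ x) continuousOn_const hγ₁'.continuousOn hmem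
    (by simp [hga]) (by simp [hgb])
  simpa [f, smul_smul, sub_sub] using hdeform

/-- outside the region `D` enclosed between `[a,b]` and the deformed
contour, the contour-deformed integral coincides with the original one. -/
theorem statement14 (a b : ℝ) (hab : a < b)
    (g : ℝ → ℝ) (hg : ContDiff ℝ 1 g) (hga : g a = 0) (hgb : g b = 0)
    (hgneg : ∀ x ∈ Set.Icc a b, g x ≤ 0)
    (K : ℂ → H →L[ℂ] H) (U : Set ℂ) (hU : IsOpen U) (hDU : regionD a b g ⊆ U)
    (hKc : ContinuousOn K (regionD a b g))
    (hKd : ∀ z ∈ U, DifferentiableAt ℂ K z)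
    (z : ℂ) (hz : z ∉ regionD a b g) :
    (∫ x in a..b, ((1 + Complex.I * Complex.ofReal (deriv g x)) *
        (z - (x : ℂ) - Complex.I * Complex.ofReal (g x))⁻¹) •
        K ((x : ℂ) + Complex.I * Complex.ofReal (g x)))
      = ∫ x in a..b, ((z - (x : ℂ))⁻¹) • K (x : ℂ) :=
  statement14_general a b hab g hg hga hgb hgneg K U hU hDU hKd z hz

end
end

section
/- For every z = x₀ + i·y₀ with a < x₀ < b and g(x₀) < y₀ < 0 (i.e. z in the interior of the region D between [a,b] and Γ) one has ∫_a^b (1 + i·g'(x)) (z − x − i·g(x))⁻¹ · K(x + i·g(x)) dx = ∫_a^b (z − x)⁻¹ · K(x) dx − 2πi · K(z); that is, the analytic continuation of the transfer integral through the interval [a,b] into the lower half-plane differs from the original integral by the residue term −2πi·K(z). -/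
/-!
Split `(z - w)⁻¹ • K w = (z - w)⁻¹ • K z - dslope K z w`. The singularity of `dslope K z` at `z`
is removable, so it is holomorphic on `U`, and its integrals along the graph of `g` and along
`[a, b]` agree: along the straight-line homotopy between the two curves, which stays in `D`, the
derivative of the integral is a boundary term that vanishes because the endpoints are fixed.
What remains is the scalar integral `∫ γ' / (z - γ)` along each curve `γ`, with primitive
`-log (i (γ - z))` along the graph and `-log (-i (γ - z))` along `[a, b]`. At the common
endpoints these are logarithms of `w` and `-w` with `Im w = x - Re z`, so they differ by `πi`
with opposite signs at `a` and `b`, leaving `-2πi`.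
-/

open MeasureTheory Set Complex

noncomputable section

variable {H : Type*} [NormedAddCommGroup H] [InnerProductSpace ℂ H] [CompleteSpace H]

open scoped Interval
open intervalIntegral Filter Topology Metric

theorem Complex.log_neg_of_im_pos {w : ℂ} (hw : 0 < w.im) :
    log (-w) = log w - Real.pi * I := by
  simp only [log, norm_neg, arg_neg_eq_arg_sub_pi_of_im_pos hw]
  push_cast
  ring

theorem Complex.log_neg_of_im_neg {w : ℂ} (hw : w.im < 0) :
    log (-w) = log w + Real.pi * I := by
  simp only [log, norm_neg, arg_neg_eq_arg_add_pi_of_im_neg hw]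
  push_cast
  ring

theorem intervalIntegral.integral_deriv_div_eq_log_sub_log {v v' : ℝ → ℂ} {a b : ℝ}
    (hv : ∀ x ∈ [[a, b]], HasDerivAt v (v' x) x) (hv' : ContinuousOn v' [[a, b]])
    (hslit : ∀ x ∈ [[a, b]], v x ∈ slitPlane) :
    ∫ x in a..b, v' x / v x = log (v b) - log (v a) := by
  have hvc : ContinuousOn v [[a, b]] := fun x hx => (hv x hx).continuousAt.continuousWithinAt
  refine integral_eq_sub_of_hasDerivAt (f := fun x => log (v x)) (fun x hx => ?_) ?_
  · simpa only [div_eq_mul_inv, mul_comm] using (hv x hx).clog_real (hslit x hx)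
  · exact (hv'.div hvc fun x hx => slitPlane_ne_zero (hslit x hx)).intervalIntegrable

theorem intervalIntegral.integral_deriv_mul_inv_sub_eq_log_sub_log {c c' : ℝ → ℂ} {a b : ℝ}
    {z u : ℂ} (hc : ∀ x ∈ [[a, b]], HasDerivAt c (c' x) x) (hc' : ContinuousOn c' [[a, b]])
    (hslit : ∀ x ∈ [[a, b]], u * (c x - z) ∈ slitPlane) :
    ∫ x in a..b, c' x * (z - c x)⁻¹ = log (u * (c a - z)) - log (u * (c b - z)) := by
  have hlog := integral_deriv_div_eq_log_sub_log (v := fun x => u * (c x - z))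
    (v' := fun x => u * c' x) (fun x hx => ((hc x hx).sub_const z).const_mul u)
    (continuousOn_const.mul hc') hslit
  rw [← neg_sub, ← hlog, ← intervalIntegral.integral_neg]
  refine integral_congr fun x hx => ?_
  have hne := slitPlane_ne_zero (hslit x hx)
  rw [mul_div_mul_left _ _ (left_ne_zero_of_mul hne), ← neg_sub z, div_neg, div_eq_mul_inv,
    neg_neg]

theorem intervalIntegral.hasDerivAt_integral_of_continuousOn {E : Type*} [NormedAddCommGroup E]
    [NormedSpace ℝ E] {f f' : ℝ → ℝ → E} {s₀ ε a b : ℝ} (hε : 0 < ε)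
    (hf : ContinuousOn (Function.uncurry f) (closedBall s₀ ε ×ˢ [[a, b]]))
    (hf' : ContinuousOn (Function.uncurry f') (closedBall s₀ ε ×ˢ [[a, b]]))
    (hderiv : ∀ s ∈ ball s₀ ε, ∀ x ∈ [[a, b]], HasDerivAt (f · x) (f' s x) s) :
    IntervalIntegrable (f' s₀) volume a b ∧
      HasDerivAt (fun s => ∫ x in a..b, f s x) (∫ x in a..b, f' s₀ x) s₀ := by
  have hslice : ∀ {g : ℝ → ℝ → E},
      ContinuousOn (Function.uncurry g) (closedBall s₀ ε ×ˢ [[a, b]]) →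
      ∀ s ∈ closedBall s₀ ε, ContinuousOn (g s) [[a, b]] := fun hg s hs =>
    hg.comp (continuousOn_const.prodMk continuousOn_id) fun x hx => ⟨hs, hx⟩
  have hs₀ : s₀ ∈ closedBall s₀ ε := mem_closedBall_self hε.le
  obtain ⟨C, hC⟩ :=
    (isCompact_closedBall s₀ ε).prod isCompact_uIcc |>.exists_bound_of_continuousOn hf'
  exact hasDerivAt_integral_of_dominated_loc_of_deriv_le (bound := fun _ => C)
    (ball_mem_nhds s₀ hε)
    (eventually_of_mem (ball_mem_nhds s₀ hε) fun s hs =>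
      ((hslice hf s (ball_subset_closedBall hs)).mono uIoc_subset_uIcc).aestronglyMeasurable
        measurableSet_uIoc)
    ((hslice hf s₀ hs₀).intervalIntegrable)
    (((hslice hf' s₀ hs₀).mono uIoc_subset_uIcc).aestronglyMeasurable measurableSet_uIoc)
    (ae_of_all _ fun x hx s hs => hC (s, x) ⟨ball_subset_closedBall hs, uIoc_subset_uIcc hx⟩)
    intervalIntegrable_const
    (ae_of_all _ fun x hx s hs => hderiv s hs x (uIoc_subset_uIcc hx))

def graphCurve (h : ℝ → ℝ) (x : ℝ) : ℂ := x + I * h x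

@[simp] theorem graphCurve_re (h : ℝ → ℝ) (x : ℝ) : (graphCurve h x).re = x := by
  simp [graphCurve]

@[simp] theorem graphCurve_im (h : ℝ → ℝ) (x : ℝ) : (graphCurve h x).im = h x := by
  simp [graphCurve]

theorem continuous_graphCurve {h : ℝ → ℝ} (hh : Continuous h) : Continuous (graphCurve h) :=
  continuous_ofReal.add (continuous_const.mul (continuous_ofReal.comp hh))

theorem continuous_deriv_graphCurve {h : ℝ → ℝ} (hh : ContDiff ℝ 1 h) :
    Continuous fun x => 1 + I * deriv h x :=
  continuous_const.add
    (continuous_const.mul (continuous_ofReal.comp (hh.continuous_deriv le_rfl)))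

theorem hasDerivAt_graphCurve {h : ℝ → ℝ} {x : ℝ} (hh : DifferentiableAt ℝ h x) :
    HasDerivAt (graphCurve h) (1 + I * deriv h x) x :=
  (hasDerivAt_id x).ofReal_comp.add (hh.hasDerivAt.ofReal_comp.const_mul I)

theorem integral_deriv_graphCurve_mul_inv_sub_eq {g : ℝ → ℝ} {a b : ℝ}
    (hg : ContDiff ℝ 1 g) (hga : g a = 0) (hgb : g b = 0) {z : ℂ} (hz : z.re ∈ Ioo a b)
    (hgz : g z.re < z.im) (hz0 : z.im < 0) :
    ∫ x in a..b, (1 + I * deriv g x) * (z - graphCurve g x)⁻¹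
      = (∫ x in a..b, (z - x)⁻¹) - 2 * Real.pi * I := by
  -- `i (γ x - z)` is real only at `x = Re z`, where it equals `Im z - g (Re z) > 0`;
  -- `-i (x - z)` has real part `-Im z > 0`.
  have hgraph := integral_deriv_mul_inv_sub_eq_log_sub_log (a := a) (b := b) (z := z) (u := I)
    (fun x _ => hasDerivAt_graphCurve (hg.differentiable one_ne_zero x))
    (continuous_deriv_graphCurve hg).continuousOn
    (fun x _ => by
      rw [mem_slitPlane_iff]
      by_cases hx : x = z.re
      · left; simp [hx, hgz]
      · right; simp [sub_eq_zero, hx])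
  have hline := integral_deriv_mul_inv_sub_eq_log_sub_log (c := ofReal) (c' := fun _ => 1)
    (a := a) (b := b) (z := z) (u := -I) (fun x _ => (hasDerivAt_id x).ofReal_comp)
    continuousOn_const (fun x _ => by rw [mem_slitPlane_iff]; left; simp [hz0])
  have hga' : graphCurve g a = a := by simp [graphCurve, hga]
  have hgb' : graphCurve g b = b := by simp [graphCurve, hgb]
  simp only [one_mul] at hline
  rw [hgraph, hline, hga', hgb', neg_mul, neg_mul, log_neg_of_im_neg (by simpa using hz.1),
    log_neg_of_im_pos (by simpa using hz.2)]
  ring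

section StraightLineHomotopy

variable {E : Type*} [NormedAddCommGroup E] [NormedSpace ℂ E] {F : ℂ → E}

theorem hasDerivAt_smul_comp_homotopy_param {p q p' q' : ℂ} {s : ℝ}
    (hF : DifferentiableAt ℂ F (p + s * q)) :
    HasDerivAt (fun s : ℝ => (p' + s * q') • F (p + s * q))
      (q' • F (p + s * q) + ((p' + s * q') * q) • deriv F (p + s * q)) s := by
  have hs : HasDerivAt (fun s : ℝ => (s : ℂ)) 1 s := (hasDerivAt_id s).ofReal_comp
  have hΓ : HasDerivAt (fun s : ℝ => p + s * q) q s := by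
    simpa using (hs.mul_const q).const_add p
  have hc : HasDerivAt (fun s : ℝ => p' + s * q') q' s := by
    simpa using (hs.mul_const q').const_add p'
  convert hc.smul (hF.hasDerivAt.scomp s hΓ) using 1
  · rfl
  · rw [smul_smul, add_comm]; rfl

theorem hasDerivAt_smul_comp_homotopy_curve {p q : ℝ → ℂ} {p' q' : ℂ} {s x : ℝ}
    (hp : HasDerivAt p p' x) (hq : HasDerivAt q q' x)
    (hF : DifferentiableAt ℂ F (p x + s * q x)) :
    HasDerivAt (fun x => q x • F (p x + s * q x))
      (q' • F (p x + s * q x) + ((p' + s * q') * q x) • deriv F (p x + s * q x)) x := by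
  convert hq.smul (hF.hasDerivAt.scomp x (hp.add (hq.const_mul (s : ℂ)))) using 1
  · rfl
  · rw [smul_smul, add_comm, mul_comm]; rfl

variable [CompleteSpace E] {V : Set ℂ} {p q p' q' : ℝ → ℂ} {a b : ℝ}

/-- The `s`-derivative of the integrand is the `x`-derivative of `q x • F (p x + s * q x)`
(the form `F w dw` is closed), so the derivative of the integral is a boundary term. -/
theorem hasDerivAt_integral_smul_comp_homotopy_eq_zero (hV : IsOpen V)
    (hF : DifferentiableOn ℂ F V) (hp : ∀ x ∈ [[a, b]], HasDerivAt p (p' x) x)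
    (hq : ∀ x ∈ [[a, b]], HasDerivAt q (q' x) x) (hp' : ContinuousOn p' [[a, b]])
    (hq' : ContinuousOn q' [[a, b]]) (hqa : q a = 0) (hqb : q b = 0) {s₀ : ℝ}
    (hs₀ : ∀ᶠ s : ℝ in 𝓝 s₀, ∀ x ∈ [[a, b]], p x + s * q x ∈ V) :
    HasDerivAt (fun s : ℝ => ∫ x in a..b, (p' x + s * q' x) • F (p x + s * q x)) 0 s₀ := by
  obtain ⟨ε, hε, hball⟩ := Metric.eventually_nhds_iff_ball.mp hs₀
  set S := closedBall s₀ (ε / 2) ×ˢ [[a, b]]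
  have hSV : MapsTo (fun y : ℝ × ℝ => p y.2 + y.1 * q y.2) S V := fun y hy =>
    hball y.1 (closedBall_subset_ball (half_lt_self hε) hy.1) y.2 hy.2
  have hc' : ∀ {f : ℝ → ℂ}, ContinuousOn f [[a, b]] →
      ContinuousOn (fun y : ℝ × ℝ => f y.2) S := fun hf => hf.comp continuousOn_snd fun y hy => hy.2
  have hc : ∀ {f f' : ℝ → ℂ}, (∀ x ∈ [[a, b]], HasDerivAt f (f' x) x) →
      ContinuousOn (fun y : ℝ × ℝ => f y.2) S := fun hf =>
    hc' fun x hx => (hf x hx).continuousAt.continuousWithinAt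
  have hΓ : ContinuousOn (fun y : ℝ × ℝ => p y.2 + y.1 * q y.2) S :=
    (hc hp).add ((continuous_ofReal.comp continuous_fst).continuousOn.mul (hc hq))
  have hFΓ := hF.continuousOn.comp hΓ hSV
  have hF'Γ := ((hF.analyticOnNhd hV).deriv.continuousOn).comp hΓ hSV
  have hcoef : ContinuousOn (fun y : ℝ × ℝ => p' y.2 + y.1 * q' y.2) S :=
    (hc' hp').add ((continuous_ofReal.comp continuous_fst).continuousOn.mul (hc' hq'))
  obtain ⟨hGi, hΦ⟩ := hasDerivAt_integral_of_continuousOn (half_pos hε)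
    (f := fun s x => (p' x + s * q' x) • F (p x + s * q x))
    (f' := fun s x =>
      q' x • F (p x + s * q x) + ((p' x + s * q' x) * q x) • deriv F (p x + s * q x))
    (hcoef.smul hFΓ) (((hc' hq').smul hFΓ).add ((hcoef.mul (hc hq)).smul hF'Γ))
    fun s hs x hx => hasDerivAt_smul_comp_homotopy_param (hF.differentiableAt
      (hV.mem_nhds (@hSV (s, x) ⟨ball_subset_closedBall hs, hx⟩)))
  convert hΦ using 1
  rw [integral_eq_sub_of_hasDerivAt (f := fun x => q x • F (p x + s₀ * q x))
    (fun x hx => hasDerivAt_smul_comp_homotopy_curve (hp x hx) (hq x hx) (hF.differentiableAt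
      (hV.mem_nhds (@hSV (s₀, x) ⟨mem_closedBall_self (half_pos hε).le, hx⟩)))) hGi]
  simp [hqa, hqb]

theorem integral_smul_comp_eq_of_straightLineHomotopy (hV : IsOpen V)
    (hF : DifferentiableOn ℂ F V) {γ₀ γ₁ γ₀' γ₁' : ℝ → ℂ}
    (hγ₀ : ∀ x ∈ [[a, b]], HasDerivAt γ₀ (γ₀' x) x)
    (hγ₁ : ∀ x ∈ [[a, b]], HasDerivAt γ₁ (γ₁' x) x)
    (hγ₀' : ContinuousOn γ₀' [[a, b]]) (hγ₁' : ContinuousOn γ₁' [[a, b]])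
    (ha : γ₀ a = γ₁ a) (hb : γ₀ b = γ₁ b)
    (hmem : ∀ s ∈ Icc (0 : ℝ) 1, ∀ x ∈ [[a, b]], γ₀ x + s * (γ₁ x - γ₀ x) ∈ V) :
    ∫ x in a..b, γ₀' x • F (γ₀ x) = ∫ x in a..b, γ₁' x • F (γ₁ x) := by
  set Φ := fun s : ℝ => ∫ x in a..b,
    (γ₀' x + s * (γ₁' x - γ₀' x)) • F (γ₀ x + s * (γ₁ x - γ₀ x))
  have hΦ : ∀ s ∈ Icc (0 : ℝ) 1, HasDerivAt Φ 0 s := fun s hs =>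
    hasDerivAt_integral_smul_comp_homotopy_eq_zero hV hF hγ₀
      (fun x hx => (hγ₁ x hx).sub (hγ₀ x hx)) hγ₀' (hγ₁'.sub hγ₀') (sub_eq_zero.mpr ha.symm)
      (sub_eq_zero.mpr hb.symm) <| isCompact_uIcc.eventually_forall_of_forall_eventually
        fun x hx => ContinuousAt.eventually_mem
          (((hγ₀ x hx).continuousAt.comp continuousAt_snd).add
            ((continuous_ofReal.continuousAt.comp continuousAt_fst).mul
              (((hγ₁ x hx).continuousAt.sub (hγ₀ x hx).continuousAt).comp continuousAt_snd)))
          (hV.mem_nhds (hmem s hs x hx))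
  have hΦ01 := constant_of_has_deriv_right_zero
    (fun s hs => (hΦ s hs).continuousAt.continuousWithinAt)
    (fun s hs => (hΦ s (Ico_subset_Icc_self hs)).hasDerivWithinAt) 1
    (right_mem_Icc.2 zero_le_one)
  simpa [Φ] using hΦ01.symm

end StraightLineHomotopy

theorem intervalIntegral.integral_smul_inv_sub_eq_sub_integral_dslope {E : Type*}
    [NormedAddCommGroup E] [NormedSpace ℂ E] [CompleteSpace E] {K : ℂ → E} {c w : ℝ → ℂ}
    {z : ℂ} {a b : ℝ} {s : Set ℂ} (hc : ContinuousOn c [[a, b]]) (hw : ContinuousOn w [[a, b]])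
    (hcz : ∀ x ∈ [[a, b]], c x ≠ z) (hK : ContinuousOn (dslope K z) s)
    (hcs : MapsTo c [[a, b]] s) :
    ∫ x in a..b, (w x * (z - c x)⁻¹) • K (c x)
      = (∫ x in a..b, w x * (z - c x)⁻¹) • K z - ∫ x in a..b, w x • dslope K z (c x) := by
  have hinv : ContinuousOn (fun x => w x * (z - c x)⁻¹) [[a, b]] :=
    hw.mul (continuousOn_const.sub hc |>.inv₀ fun x hx => sub_ne_zero.mpr (hcz x hx).symm)
  have hint₁ : IntervalIntegrable (fun x => (w x * (z - c x)⁻¹) • K z) volume a b :=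
    (hinv.smul continuousOn_const).intervalIntegrable
  have hint₂ : IntervalIntegrable (fun x => w x • dslope K z (c x)) volume a b :=
    (hw.smul (hK.comp hc hcs)).intervalIntegrable
  rw [← integral_smul_const, ← integral_sub hint₁ hint₂]
  refine integral_congr fun x hx => ?_
  simp only [dslope_of_ne K (hcz x hx), slope_def_module, ← neg_sub z (c x), inv_neg]
  module

section Graph

variable {E : Type*} [NormedAddCommGroup E] [NormedSpace ℂ E] [CompleteSpace E] {g : ℝ → ℝ}
  {a b : ℝ} {U : Set ℂ}

theorem integral_deriv_graphCurve_smul_eq (hg : ContDiff ℝ 1 g) (hga : g a = 0)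
    (hgb : g b = 0) (hgneg : ∀ x ∈ [[a, b]], g x ≤ 0) (hU : IsOpen U)
    (hD : ∀ x ∈ [[a, b]], ∀ y ∈ Icc (g x) 0, (x : ℂ) + I * y ∈ U) {F : ℂ → E}
    (hF : DifferentiableOn ℂ F U) :
    ∫ x in a..b, (1 + I * deriv g x) • F (graphCurve g x) = ∫ x in a..b, F x := by
  have hmem : ∀ s ∈ Icc (0 : ℝ) 1, ∀ x ∈ [[a, b]],
      graphCurve g x + s * (x - graphCurve g x) ∈ U := by
    intro s hs x hx
    convert hD x hx ((1 - s) * g x) ⟨by nlinarith [hgneg x hx, hs.1],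
      mul_nonpos_of_nonneg_of_nonpos (sub_nonneg.2 hs.2) (hgneg x hx)⟩ using 1
    simp only [graphCurve]
    push_cast
    ring
  simpa using integral_smul_comp_eq_of_straightLineHomotopy hU hF (γ₀ := graphCurve g)
    (γ₁ := ofReal) (γ₁' := fun _ => 1)
    (fun x _ => hasDerivAt_graphCurve (hg.differentiable one_ne_zero x))
    (fun x _ => (hasDerivAt_id x).ofReal_comp)
    (continuous_deriv_graphCurve hg).continuousOn continuousOn_const
    (by simp [graphCurve, hga]) (by simp [graphCurve, hgb]) hmem

theorem integral_deriv_graphCurve_mul_inv_sub_smul_eq (hg : ContDiff ℝ 1 g) (hga : g a = 0)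
    (hgb : g b = 0) (hgneg : ∀ x ∈ [[a, b]], g x ≤ 0) (hU : IsOpen U)
    (hD : ∀ x ∈ [[a, b]], ∀ y ∈ Icc (g x) 0, (x : ℂ) + I * y ∈ U) {K : ℂ → E}
    (hK : DifferentiableOn ℂ K U) {z : ℂ} (hz : z.re ∈ Ioo a b) (hgz : g z.re < z.im)
    (hz0 : z.im < 0) :
    ∫ x in a..b, ((1 + I * deriv g x) * (z - graphCurve g x)⁻¹) • K (graphCurve g x)
      = (∫ x in a..b, (z - x)⁻¹ • K x) - (2 * Real.pi * I) • K z := by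
  have hzU : z ∈ U := by
    simpa [mul_comm I, re_add_im] using
      hD z.re (Icc_subset_uIcc (Ioo_subset_Icc_self hz)) z.im ⟨hgz.le, hz0.le⟩
  have hdslope : DifferentiableOn ℂ (dslope K z) U :=
    (differentiableOn_dslope (hU.mem_nhds hzU)).2 hK
  have hgraph_ne : ∀ x, graphCurve g x ≠ z := fun x h => by
    have hre : x = z.re := by simpa using congrArg re h
    exact hgz.ne (by simpa [hre] using congrArg im h)
  have hline_ne : ∀ x : ℝ, (x : ℂ) ≠ z := fun x h =>
    hz0.ne (by simpa using (congrArg im h).symm)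
  have hline := integral_smul_inv_sub_eq_sub_integral_dslope (K := K) (w := fun _ => 1)
    continuous_ofReal.continuousOn continuousOn_const (fun x _ => hline_ne x)
    hdslope.continuousOn fun x hx => by simpa using hD x hx 0 ⟨hgneg x hx, le_rfl⟩
  simp only [one_mul, one_smul] at hline
  rw [integral_smul_inv_sub_eq_sub_integral_dslope
    (continuous_graphCurve hg.continuous).continuousOn (continuous_deriv_graphCurve hg).continuousOn
    (fun x _ => hgraph_ne x) hdslope.continuousOn
    fun x hx => hD x hx (g x) ⟨le_rfl, hgneg x hx⟩,
    integral_deriv_graphCurve_smul_eq hg hga hgb hgneg hU hD hdslope,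
    integral_deriv_graphCurve_mul_inv_sub_eq hg hga hgb hz hgz hz0, hline, sub_smul]
  abel

end Graph

theorem statement15_general (a b : ℝ) (hab : a < b)
    (g : ℝ → ℝ) (hg : ContDiff ℝ 1 g) (hga : g a = 0) (hgb : g b = 0)
    (hgneg : ∀ x ∈ Set.Icc a b, g x ≤ 0)
    (K : ℂ → H →L[ℂ] H) (U : Set ℂ) (hU : IsOpen U)
    (hDU : {z : ℂ | z.re ∈ Set.Icc a b ∧ z.im ∈ Set.Icc (g z.re) 0} ⊆ U)
    (hKd : ∀ w ∈ U, DifferentiableAt ℂ K w)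
    (x₀ y₀ : ℝ) (hx₀ : x₀ ∈ Set.Ioo a b) (hy₀ : y₀ ∈ Set.Ioo (g x₀) 0)
    (z : ℂ) (hz : z = Complex.ofReal x₀ + Complex.I * Complex.ofReal y₀) :
    (∫ x in a..b, ((1 + Complex.I * Complex.ofReal (deriv g x)) *
        (z - (x : ℂ) - Complex.I * Complex.ofReal (g x))⁻¹) •
        K ((x : ℂ) + Complex.I * Complex.ofReal (g x)))
      = (∫ x in a..b, ((z - (x : ℂ))⁻¹) • K (x : ℂ))
          - (2 * (Real.pi : ℂ) * Complex.I) • K z := by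
  have hzre : z.re = x₀ := by simp [hz]
  have hzim : z.im = y₀ := by simp [hz]
  have hI : [[a, b]] = Icc a b := uIcc_of_le hab.le
  have hD : ∀ x ∈ [[a, b]], ∀ y ∈ Icc (g x) 0, (x : ℂ) + I * y ∈ U := fun x hx y hy =>
    hDU ⟨by simpa [hI] using hx, by simpa using hy⟩
  simp only [sub_sub]
  exact integral_deriv_graphCurve_mul_inv_sub_smul_eq hg hga hgb (hI ▸ hgneg) hU hD
    (fun w hw => (hKd w hw).differentiableWithinAt) (hzre ▸ hx₀)
    (by rw [hzre, hzim]; exact hy₀.1) (hzim ▸ hy₀.2)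

/-- for `z` in the interior of the region between `[a,b]` and the
deformed contour, the continued integral differs from the original one by the residue
term `−2πi K(z)`. -/
theorem statement15 (a b : ℝ) (hab : a < b)
    (g : ℝ → ℝ) (hg : ContDiff ℝ 1 g) (hga : g a = 0) (hgb : g b = 0)
    (hgneg : ∀ x ∈ Set.Icc a b, g x ≤ 0)
    (K : ℂ → H →L[ℂ] H) (U : Set ℂ) (hU : IsOpen U)
    (hDU : {z : ℂ | z.re ∈ Set.Icc a b ∧ z.im ∈ Set.Icc (g z.re) 0} ⊆ U)
    (hKc : ContinuousOn K {z : ℂ | z.re ∈ Set.Icc a b ∧ z.im ∈ Set.Icc (g z.re) 0})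
    (hKd : ∀ w ∈ U, DifferentiableAt ℂ K w)
    (x₀ y₀ : ℝ) (hx₀ : x₀ ∈ Set.Ioo a b) (hy₀ : y₀ ∈ Set.Ioo (g x₀) 0)
    (z : ℂ) (hz : z = Complex.ofReal x₀ + Complex.I * Complex.ofReal y₀) :
    (∫ x in a..b, ((1 + Complex.I * Complex.ofReal (deriv g x)) *
        (z - (x : ℂ) - Complex.I * Complex.ofReal (g x))⁻¹) •
        K ((x : ℂ) + Complex.I * Complex.ofReal (g x)))
      = (∫ x in a..b, ((z - (x : ℂ))⁻¹) • K (x : ℂ))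
          - (2 * (Real.pi : ℂ) * Complex.I) • K z :=
  statement15_general a b hab g hg hga hgb hgneg K U hU hDU hKd x₀ y₀ hx₀ hy₀ z hz

end
end
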